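/- arXiv:2405.11418 — 6 statements merged into one kernel-verified Lean document; each statement's English description precedes it below -/
import Mathlib

section
/- Realizability of regular abstract game forms: for every regular abstract game form G = (AC0, force) over the language Φ_CCSR and every satisfiable elementary conjunction γ, there exists a pointed concurrent game model (M, s0) that realizes G and γ. -/
open scoped Classical

/-- Graph-inclusion between joint actions (represented as partial functions). -/
def subJA {Agt Act : Type} (σ σ' : Agt → Option Act) : Prop :=
  ∀ a x, σ a = some x → σ' a = some x

/-- Restriction of a joint action to a coalition. -/
noncomputable def restrictJA {Agt Act : Type} (σ : Agt → Option Act) (B : Set Agt) :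
    Agt → Option Act :=
  fun a => if a ∈ B then σ a else none

/-- σ_A ⊎ σ_B : keep σ_A on A and σ_B on B − A. -/
noncomputable def uplusJA {Agt Act : Type} (A B : Set Agt) (σA σB : Agt → Option Act) :
    Agt → Option Act :=
  fun a => if a ∈ A then σA a else if a ∈ B then σB a else none

/-- Concurrent game models over agents `Agt` and atomic propositions `AP`.
A joint action of a coalition `A` is represented as a function `Agt → Option Act`
whose domain (the set of agents where it is `some`) is exactly `A`. -/
structure CGM (Agt AP : Type) where
  St : Type
  Act : Type
  st_ne : Nonempty St
  act_ne : Nonempty Act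
  aja : St → Set Agt → Set (Agt → Option Act)
  out : St → (Agt → Option Act) → Set St
  lab : St → Set AP
  aja_ne : ∀ s A, (aja s A).Nonempty
  aja_dom : ∀ s A, ∀ σ ∈ aja s A, ∀ a, (σ a).isSome ↔ a ∈ A
  aja_glue : ∀ s A (σ : Agt → Option Act), A.Nonempty →
      (∀ a, (σ a).isSome ↔ a ∈ A) →
      (σ ∈ aja s A ↔ ∀ a ∈ A, restrictJA σ {a} ∈ aja s {a})
  out_univ : ∀ s, ∀ σ ∈ aja s Set.univ, ∃ t, out s σ = {t}
  out_univ_not : ∀ s (σ : Agt → Option Act), (∀ a, (σ a).isSome) →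
      σ ∉ aja s Set.univ → out s σ = ∅
  out_glue : ∀ s A, A ≠ Set.univ → ∀ σ ∈ aja s A,
      out s σ = {t | ∃ σ' ∈ aja s Set.univ, subJA σ σ' ∧ t ∈ out s σ'}
  out_not : ∀ s A (σ : Agt → Option Act), (∀ a, (σ a).isSome ↔ a ∈ A) →
      A ≠ Set.univ → σ ∉ aja s A → out s σ = ∅

/-- The full language Φ_CCSR. -/
inductive FormC (Agt AP : Type) : Type
  | top : FormC Agt AP
  | atom : AP → FormC Agt AP
  | neg : FormC Agt AP → FormC Agt AP
  | and : FormC Agt AP → FormC Agt AP → FormC Agt AP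
  | coop : Set Agt → Set Agt → FormC Agt AP → FormC Agt AP → FormC Agt AP

/-- Satisfaction for Φ_CCSR. -/
def satC {Agt AP : Type} (M : CGM Agt AP) : M.St → FormC Agt AP → Prop
  | _, FormC.top => True
  | s, FormC.atom p => p ∈ M.lab s
  | s, FormC.neg φ => ¬ satC M s φ
  | s, FormC.and φ ψ => satC M s φ ∧ satC M s ψ
  | s, FormC.coop A B φ ψ =>
      ∃ σA ∈ M.aja s A, (∀ t ∈ M.out s σA, satC M t φ) ∧
        ∃ σB ∈ M.aja s B, ∀ t ∈ M.out s (uplusJA A B σA σB), satC M t ψ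

/-- Literals of Φ_CCSR. -/
inductive IsLitC {Agt AP : Type} : FormC Agt AP → Prop
  | atom (p : AP) : IsLitC (FormC.atom p)
  | natom (p : AP) : IsLitC (FormC.neg (FormC.atom p))

/-- Elementary conjunctions: conjunctions of literals. -/
inductive IsElemConjC {Agt AP : Type} : FormC Agt AP → Prop
  | lit {φ : FormC Agt AP} : IsLitC φ → IsElemConjC φ
  | and {φ ψ : FormC Agt AP} : IsElemConjC φ → IsElemConjC ψ → IsElemConjC (FormC.and φ ψ)

namespace Realize

variable {Agt B C : Type}

def injJA (g : C → B) (τ : Agt → Option C) : Agt → Option B :=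
  fun a => (τ a).map g

lemma injJA_injective {g : C → B} (hg : Function.Injective g) :
    Function.Injective (injJA (Agt := Agt) g) := fun _ _ h =>
  funext fun a => Option.map_injective hg (congrFun h a)

lemma subJA_injJA {g : C → B} (hg : Function.Injective g) {τ τ' : Agt → Option C} :
    subJA (injJA g τ) (injJA g τ') ↔ subJA τ τ' := by
  constructor
  · intro h a x hx
    have h2 := h a (g x) (by simp [injJA, hx])
    simp only [injJA] at h2
    cases hτ' : τ' a with
    | none => simp [hτ'] at h2
    | some y =>
      simp only [hτ', Option.map_some, Option.some.injEq] at h2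
      rw [hg h2]
  · intro h a x hx
    simp only [injJA] at hx ⊢
    cases hτ : τ a with
    | none => simp [hτ] at hx
    | some y =>
      simp only [hτ, Option.map_some, Option.some.injEq] at hx
      rw [h a y hτ, Option.map_some, hx]

lemma restrictJA_injJA (g : C → B) (τ : Agt → Option C) (D : Set Agt) :
    restrictJA (injJA g τ) D = injJA g (restrictJA τ D) := by
  funext a; by_cases h : a ∈ D <;> simp [restrictJA, injJA, h]

lemma uplusJA_injJA (g : C → B) (A D : Set Agt) (τ τ' : Agt → Option C) :
    uplusJA A D (injJA g τ) (injJA g τ') = injJA g (uplusJA A D τ τ') := by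
  funext a
  by_cases h : a ∈ A
  · simp [uplusJA, injJA, h]
  · by_cases h' : a ∈ D <;> simp [uplusJA, injJA, h, h']

lemma isSome_injJA (g : C → B) (τ : Agt → Option C) (a : Agt) :
    (injJA g τ a).isSome = (τ a).isSome := by cases h : τ a <;> simp [injJA, h]

noncomputable def decodeJA (g : C → B) (σ' : Agt → Option B) : Agt → Option C :=
  fun a => if h : ∃ y, σ' a = some (g y) then some h.choose else none

lemma injJA_decodeJA {g : C → B} {σ' : Agt → Option B}
    (h : ∀ a x, σ' a = some x → ∃ y, x = g y) : σ' = injJA g (decodeJA g σ') := by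
  funext a
  simp only [injJA, decodeJA]
  by_cases hc : ∃ y, σ' a = some (g y)
  · rw [dif_pos hc, Option.map_some]
    exact hc.choose_spec
  · rw [dif_neg hc, Option.map_none]
    cases hσ : σ' a with
    | none => rfl
    | some x =>
      obtain ⟨y, hy⟩ := h a x hσ
      exact absurd ⟨y, by rw [hσ, hy]⟩ hc

lemma isSome_decodeJA {g : C → B} {σ' : Agt → Option B} {a : Agt} :
    (decodeJA g σ' a).isSome ↔ ∃ y, σ' a = some (g y) := by
  simp only [decodeJA]; split <;> simp_all

set_option linter.unusedSectionVars false

section Model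

variable {AP Act0 : Type} [Nonempty Act0]
variable (Msub : (Agt → Act0) → CGM Agt AP)

abbrev BigSt : Type := Unit ⊕ Σ σf : Agt → Act0, (Msub σf).St

abbrev BigAct : Type := Act0 ⊕ Σ σf : Agt → Act0, (Msub σf).Act

def injA (σf : Agt → Act0) : (Msub σf).Act → BigAct Msub := fun x => Sum.inr ⟨σf, x⟩

lemma injA_injective (σf : Agt → Act0) : Function.Injective (injA Msub σf) := by
  intro x y h
  simp only [injA, Sum.inr.injEq, Sigma.mk.inj_iff, heq_eq_eq, true_and] at h
  exact h

def Fmap (σf : Agt → Act0) : Agt → Option (BigAct Msub) := fun a => some (Sum.inl (σf a))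

def ajaBig : BigSt Msub → Set Agt → Set (Agt → Option (BigAct Msub))
  | Sum.inl _, A => {σ' | ∃ σ : Agt → Option Act0,
      (∀ a, (σ a).isSome ↔ a ∈ A) ∧ σ' = fun a => (σ a).map Sum.inl}
  | Sum.inr ⟨σf, t⟩, A => injJA (injA Msub σf) '' ((Msub σf).aja t A)

variable (wit : ∀ σf : Agt → Act0, (Msub σf).St) (lab0 : Set AP)

def outBig : BigSt Msub → (Agt → Option (BigAct Msub)) → Set (BigSt Msub)
  | Sum.inl _, σ' => {t | ∃ σf : Agt → Act0, subJA σ' (Fmap Msub σf) ∧ t = Sum.inr ⟨σf, wit σf⟩}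
  | Sum.inr ⟨σf, t⟩, σ' => {t' | ∃ τ, σ' = injJA (injA Msub σf) τ ∧
      ∃ u ∈ (Msub σf).out t τ, t' = Sum.inr ⟨σf, u⟩}

def labBig : BigSt Msub → Set AP
  | Sum.inl _ => lab0
  | Sum.inr ⟨σf, u⟩ => (Msub σf).lab u

lemma mem_ajaRoot {u : Unit} {A : Set Agt} {σ' : Agt → Option (BigAct Msub)} :
    σ' ∈ ajaBig Msub (Sum.inl u) A ↔
      ∃ σ : Agt → Option Act0, (∀ a, (σ a).isSome ↔ a ∈ A) ∧ σ' = injJA Sum.inl σ :=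
  Iff.rfl

lemma mem_ajaComp {σf : Agt → Act0} {t : (Msub σf).St} {A : Set Agt}
    {σ' : Agt → Option (BigAct Msub)} :
    σ' ∈ ajaBig Msub (Sum.inr ⟨σf, t⟩) A ↔
      ∃ τ ∈ (Msub σf).aja t A, σ' = injJA (injA Msub σf) τ := by
  simp [ajaBig, Set.mem_image, eq_comm]

lemma Fmap_eq_injJA (σf : Agt → Act0) :
    Fmap Msub σf = injJA Sum.inl (fun a => some (σf a)) := rfl

lemma subJA_Fmap {σf σg : Agt → Act0} :
    subJA (Fmap Msub σf) (Fmap Msub σg) ↔ σf = σg := by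
  constructor
  · intro h
    funext a
    have h2 := h a (Sum.inl (σf a)) rfl
    simp only [Fmap, Option.some.injEq, Sum.inl.injEq] at h2
    exact h2.symm
  · rintro rfl; intro a x hx; exact hx

lemma ajaRoot_univ {u : Unit} {σ' : Agt → Option (BigAct Msub)} :
    σ' ∈ ajaBig Msub (Sum.inl u) Set.univ ↔ ∃ σf : Agt → Act0, σ' = Fmap Msub σf := by
  rw [mem_ajaRoot]
  constructor
  · rintro ⟨σ, hdom, rfl⟩
    refine ⟨fun a => (σ a).get ((hdom a).mpr trivial), ?_⟩
    funext a
    simp [injJA, Fmap, Option.some_get]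
  · rintro ⟨σf, rfl⟩
    exact ⟨fun a => some (σf a), by simp, rfl⟩

end Model

end Realize
namespace Realize

set_option linter.unusedSectionVars false

section Model2

variable {Agt AP Act0 : Type} [Nonempty Act0]
variable (Msub : (Agt → Act0) → CGM Agt AP)
variable (wit : ∀ σf : Agt → Act0, (Msub σf).St) (lab0 : Set AP)

lemma outBig_comp {σf : Agt → Act0} {t0 : (Msub σf).St} {τ : Agt → Option (Msub σf).Act} :
    outBig Msub wit (Sum.inr ⟨σf, t0⟩) (injJA (injA Msub σf) τ) =
      {t' | ∃ u ∈ (Msub σf).out t0 τ, t' = Sum.inr ⟨σf, u⟩} := by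
  ext t'
  simp only [outBig, Set.mem_setOf_eq]
  constructor
  · rintro ⟨τ', heq, hu⟩
    rw [injJA_injective (injA_injective Msub σf) heq]
    exact hu
  · intro h; exact ⟨τ, rfl, h⟩

lemma ajaBig_ne (s : BigSt Msub) (A : Set Agt) : (ajaBig Msub s A).Nonempty := by
  cases s with
  | inl u =>
    refine ⟨injJA Sum.inl (fun a => if a ∈ A then some (Classical.arbitrary Act0) else none),
      ⟨_, fun a => ?_, rfl⟩⟩
    by_cases h : a ∈ A <;> simp [h]
  | inr p =>
    obtain ⟨σf, t⟩ := p
    obtain ⟨τ, hτ⟩ := (Msub σf).aja_ne t A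
    exact ⟨_, Set.mem_image_of_mem _ hτ⟩

lemma ajaBig_dom : ∀ (s : BigSt Msub) A, ∀ σ' ∈ ajaBig Msub s A, ∀ a, (σ' a).isSome ↔ a ∈ A := by
  intro s A σ' h a
  cases s with
  | inl u =>
    obtain ⟨σ, hdom, rfl⟩ := h
    simpa [Option.isSome_map] using hdom a
  | inr p =>
    obtain ⟨σf, t⟩ := p
    obtain ⟨τ, hτ, rfl⟩ := (mem_ajaComp Msub).mp h
    rw [isSome_injJA]
    exact (Msub σf).aja_dom t A τ hτ a

lemma ajaBig_glue : ∀ (s : BigSt Msub) A (σ' : Agt → Option (BigAct Msub)), A.Nonempty →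
    (∀ a, (σ' a).isSome ↔ a ∈ A) →
    (σ' ∈ ajaBig Msub s A ↔ ∀ a ∈ A, restrictJA σ' {a} ∈ ajaBig Msub s {a}) := by
  intro s A σ' hA hdom
  cases s with
  | inl u =>
    constructor
    · rintro ⟨σ, hσdom, rfl⟩ a ha
      refine ⟨restrictJA σ {a}, fun a' => ?_, restrictJA_injJA _ _ _⟩
      by_cases h : a' ∈ ({a} : Set Agt)
      · rw [Set.mem_singleton_iff] at h; subst h
        simp only [restrictJA, if_pos (Set.mem_singleton a')]
        simp [hσdom a', ha]
      · simp [restrictJA, h]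
    · intro h
      have hrange : ∀ a x, σ' a = some x → ∃ y, x = Sum.inl y := by
        intro a x hx
        have haA : a ∈ A := (hdom a).mp (by simp [hx])
        obtain ⟨σa, hσa_dom, hσa_eq⟩ := h a haA
        have h2 := congrFun hσa_eq a
        simp only [restrictJA, if_pos (Set.mem_singleton a)] at h2
        rw [hx] at h2
        cases hc : σa a with
        | none => rw [hc] at h2; simp at h2
        | some y => rw [hc] at h2; simp at h2; exact ⟨y, h2⟩
      refine ⟨decodeJA Sum.inl σ', fun a => ?_, injJA_decodeJA hrange⟩
      rw [isSome_decodeJA]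
      constructor
      · rintro ⟨y, hy⟩
        exact (hdom a).mp (by simp [hy])
      · intro ha
        obtain ⟨x, hx⟩ := Option.isSome_iff_exists.mp ((hdom a).mpr ha)
        obtain ⟨y, rfl⟩ := hrange a x hx
        exact ⟨y, hx⟩
  | inr p =>
    obtain ⟨σf, t⟩ := p
    constructor
    · intro h a ha
      obtain ⟨τ, hτ, rfl⟩ := (mem_ajaComp Msub).mp h
      have hτdom := (Msub σf).aja_dom t A τ hτ
      have hmem := ((Msub σf).aja_glue t A τ hA hτdom).mp hτ a ha
      exact (mem_ajaComp Msub).mpr ⟨_, hmem, restrictJA_injJA _ _ _⟩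
    · intro h
      have hrange : ∀ a x, σ' a = some x → ∃ y, x = injA Msub σf y := by
        intro a x hx
        have haA : a ∈ A := (hdom a).mp (by simp [hx])
        obtain ⟨τa, hτa, heq⟩ := (mem_ajaComp Msub).mp (h a haA)
        have h2 := congrFun heq a
        simp only [restrictJA, if_pos (Set.mem_singleton a)] at h2
        rw [hx] at h2
        simp only [injJA] at h2
        cases hc : τa a with
        | none => rw [hc] at h2; simp at h2
        | some y => rw [hc] at h2; simp at h2; exact ⟨y, h2⟩
      set τ := decodeJA (injA Msub σf) σ' with hτdef
      have hτeq : σ' = injJA (injA Msub σf) τ := injJA_decodeJA hrange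
      have hτdom : ∀ a, (τ a).isSome ↔ a ∈ A := by
        intro a
        rw [hτdef, isSome_decodeJA]
        constructor
        · rintro ⟨y, hy⟩; exact (hdom a).mp (by simp [hy])
        · intro ha
          obtain ⟨x, hx⟩ := Option.isSome_iff_exists.mp ((hdom a).mpr ha)
          obtain ⟨y, rfl⟩ := hrange a x hx
          exact ⟨y, hx⟩
      refine (mem_ajaComp Msub).mpr ⟨τ, ?_, hτeq⟩
      rw [(Msub σf).aja_glue t A τ hA hτdom]
      intro a ha
      obtain ⟨τa, hτa, heq⟩ := (mem_ajaComp Msub).mp (h a ha)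
      have h3 : injJA (injA Msub σf) τa = injJA (injA Msub σf) (restrictJA τ {a}) := by
        rw [← heq, hτeq, restrictJA_injJA]
      have h4 := injJA_injective (injA_injective Msub σf) h3
      rw [← h4]
      exact hτa

lemma outBig_univ : ∀ (s : BigSt Msub), ∀ σ' ∈ ajaBig Msub s Set.univ,
    ∃ t, outBig Msub wit s σ' = {t} := by
  intro s σ' h
  cases s with
  | inl u =>
    obtain ⟨σf, rfl⟩ := (ajaRoot_univ Msub).mp h
    refine ⟨Sum.inr ⟨σf, wit σf⟩, ?_⟩
    ext t
    simp only [outBig, Set.mem_setOf_eq, Set.mem_singleton_iff]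
    constructor
    · rintro ⟨σg, hsub, rfl⟩
      rw [(subJA_Fmap Msub).mp hsub]
    · rintro rfl
      exact ⟨σf, fun a x hx => hx, rfl⟩
  | inr p =>
    obtain ⟨σf, t0⟩ := p
    obtain ⟨τ, hτ, rfl⟩ := (mem_ajaComp Msub).mp h
    obtain ⟨u0, hu0⟩ := (Msub σf).out_univ t0 τ hτ
    refine ⟨Sum.inr ⟨σf, u0⟩, ?_⟩
    rw [outBig_comp]
    ext t'
    simp only [Set.mem_setOf_eq, Set.mem_singleton_iff, hu0]
    constructor
    · rintro ⟨u, hu, rfl⟩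
      rw [hu]
    · rintro rfl
      exact ⟨u0, rfl, rfl⟩

lemma outBig_univ_not : ∀ (s : BigSt Msub) (σ' : Agt → Option (BigAct Msub)),
    (∀ a, (σ' a).isSome) → σ' ∉ ajaBig Msub s Set.univ → outBig Msub wit s σ' = ∅ := by
  intro s σ' hfull hnot
  cases s with
  | inl u =>
    ext t
    simp only [outBig, Set.mem_setOf_eq, Set.mem_empty_iff_false, iff_false]
    rintro ⟨σf, hsub, rfl⟩
    apply hnot
    apply (ajaRoot_univ Msub).mpr ⟨σf, ?_⟩
    funext a
    obtain ⟨x, hx⟩ := Option.isSome_iff_exists.mp (hfull a)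
    have := hsub a x hx
    rw [hx, ← this]
  | inr p =>
    obtain ⟨σf, t0⟩ := p
    ext t'
    simp only [outBig, Set.mem_setOf_eq, Set.mem_empty_iff_false, iff_false]
    rintro ⟨τ, rfl, u, hu, rfl⟩
    have hτfull : ∀ a, (τ a).isSome := by
      intro a; have := hfull a; rwa [isSome_injJA] at this
    have hτnot : τ ∉ (Msub σf).aja t0 Set.univ := by
      intro hc; exact hnot ((mem_ajaComp Msub).mpr ⟨τ, hc, rfl⟩)
    rw [(Msub σf).out_univ_not t0 τ hτfull hτnot] at hu
    exact hu

lemma outBig_glue : ∀ (s : BigSt Msub) A, A ≠ Set.univ → ∀ σ' ∈ ajaBig Msub s A,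
    outBig Msub wit s σ' = {t | ∃ σ'' ∈ ajaBig Msub s Set.univ,
      subJA σ' σ'' ∧ t ∈ outBig Msub wit s σ''} := by
  intro s A hAne σ' hmem
  cases s with
  | inl u =>
    ext t
    simp only [outBig, Set.mem_setOf_eq]
    constructor
    · rintro ⟨σf, hsub, rfl⟩
      exact ⟨Fmap Msub σf, (ajaRoot_univ Msub).mpr ⟨σf, rfl⟩, hsub,
        ⟨σf, fun a x hx => hx, rfl⟩⟩
    · rintro ⟨σ'', h1, hsub, t', hsub2, rfl⟩
      obtain ⟨σg, rfl⟩ := (ajaRoot_univ Msub).mp h1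
      rw [← (subJA_Fmap Msub).mp hsub2]
      exact ⟨σg, hsub, rfl⟩
  | inr p =>
    obtain ⟨σf, t0⟩ := p
    obtain ⟨τ, hτ, rfl⟩ := (mem_ajaComp Msub).mp hmem
    rw [outBig_comp]
    ext t'
    simp only [Set.mem_setOf_eq]
    rw [(Msub σf).out_glue t0 A hAne τ hτ]
    constructor
    · rintro ⟨u, ⟨τ'', hτ'', hsub, hu⟩, rfl⟩
      refine ⟨injJA (injA Msub σf) τ'', (mem_ajaComp Msub).mpr ⟨τ'', hτ'', rfl⟩,
        (subJA_injJA (injA_injective Msub σf)).mpr hsub, ?_⟩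
      rw [outBig_comp]
      exact ⟨u, hu, rfl⟩
    · rintro ⟨σ'', h1, hsub, ht'⟩
      obtain ⟨τ'', hτ'', rfl⟩ := (mem_ajaComp Msub).mp h1
      rw [outBig_comp] at ht'
      obtain ⟨u, hu, rfl⟩ := ht'
      exact ⟨u, ⟨τ'', hτ'', (subJA_injJA (injA_injective Msub σf)).mp hsub, hu⟩, rfl⟩

lemma outBig_not : ∀ (s : BigSt Msub) A (σ' : Agt → Option (BigAct Msub)),
    (∀ a, (σ' a).isSome ↔ a ∈ A) → A ≠ Set.univ → σ' ∉ ajaBig Msub s A →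
    outBig Msub wit s σ' = ∅ := by
  intro s A σ' hdom hAne hnot
  cases s with
  | inl u =>
    ext t
    simp only [outBig, Set.mem_setOf_eq, Set.mem_empty_iff_false, iff_false]
    rintro ⟨σf, hsub, rfl⟩
    apply hnot
    refine ⟨fun a => if a ∈ A then some (σf a) else none, fun a => ?_, funext fun a => ?_⟩
    · by_cases h : a ∈ A <;> simp [h]
    · by_cases h : a ∈ A
      · simp only [if_pos h, Option.map_some]
        obtain ⟨x, hx⟩ := Option.isSome_iff_exists.mp ((hdom a).mpr h)
        have h2 := hsub a x hx
        simp only [Fmap, Option.some.injEq] at h2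
        rw [hx, ← h2]
      · simp only [if_neg h, Option.map_none]
        rw [← Option.not_isSome_iff_eq_none]
        intro hc
        exact h ((hdom a).mp hc)
  | inr p =>
    obtain ⟨σf, t0⟩ := p
    ext t'
    simp only [outBig, Set.mem_setOf_eq, Set.mem_empty_iff_false, iff_false]
    rintro ⟨τ, rfl, u, hu, rfl⟩
    have hτdom : ∀ a, (τ a).isSome ↔ a ∈ A := by
      intro a; rw [← isSome_injJA (injA Msub σf) τ a]; exact hdom a
    have hτnot : τ ∉ (Msub σf).aja t0 A := by
      intro hc; exact hnot ((mem_ajaComp Msub).mpr ⟨τ, hc, rfl⟩)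
    rw [(Msub σf).out_not t0 A τ hτdom hAne hτnot] at hu
    exact hu

noncomputable def bigM : CGM Agt AP where
  St := BigSt Msub
  Act := BigAct Msub
  st_ne := ⟨Sum.inl ()⟩
  act_ne := ⟨Sum.inl (Classical.arbitrary Act0)⟩
  aja := ajaBig Msub
  out := outBig Msub wit
  lab := labBig Msub lab0
  aja_ne := ajaBig_ne Msub
  aja_dom := ajaBig_dom Msub
  aja_glue := ajaBig_glue Msub
  out_univ := outBig_univ Msub wit
  out_univ_not := outBig_univ_not Msub wit
  out_glue := outBig_glue Msub wit
  out_not := outBig_not Msub wit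

lemma satC_bigM (σf : Agt → Act0) : ∀ (φ : FormC Agt AP) (t : (Msub σf).St),
    satC (bigM Msub wit lab0) (Sum.inr ⟨σf, t⟩) φ ↔ satC (Msub σf) t φ := by
  intro φ
  induction φ with
  | top => intro t; simp [satC]
  | atom p => intro t; simp [satC, bigM, labBig]
  | neg φ ih => intro t; simp only [satC]; rw [ih]
  | and φ ψ ih1 ih2 => intro t; simp only [satC]; rw [ih1, ih2]
  | coop A B φ ψ ih1 ih2 =>
    intro t
    simp only [satC]
    constructor
    · rintro ⟨σA, hσA, hout1, σB, hσB, hout2⟩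
      obtain ⟨τA, hτA, rfl⟩ := (mem_ajaComp Msub).mp hσA
      obtain ⟨τB, hτB, rfl⟩ := (mem_ajaComp Msub).mp hσB
      refine ⟨τA, hτA, fun u hu => ?_, τB, hτB, fun u hu => ?_⟩
      · refine (ih1 u).mp (hout1 (Sum.inr ⟨σf, u⟩) ?_)
        show Sum.inr ⟨σf, u⟩ ∈ outBig Msub wit (Sum.inr ⟨σf, t⟩) (injJA (injA Msub σf) τA)
        rw [outBig_comp]
        exact ⟨u, hu, rfl⟩
      · refine (ih2 u).mp (hout2 (Sum.inr ⟨σf, u⟩) ?_)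
        show Sum.inr ⟨σf, u⟩ ∈ outBig Msub wit (Sum.inr ⟨σf, t⟩)
          (uplusJA A B (injJA (injA Msub σf) τA) (injJA (injA Msub σf) τB))
        rw [uplusJA_injJA, outBig_comp]
        exact ⟨u, hu, rfl⟩
    · rintro ⟨τA, hτA, hout1, τB, hτB, hout2⟩
      refine ⟨injJA (injA Msub σf) τA, (mem_ajaComp Msub).mpr ⟨τA, hτA, rfl⟩, fun t' ht' => ?_,
        injJA (injA Msub σf) τB, (mem_ajaComp Msub).mpr ⟨τB, hτB, rfl⟩, fun t' ht' => ?_⟩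
      · have ht'2 : t' ∈ outBig Msub wit (Sum.inr ⟨σf, t⟩) (injJA (injA Msub σf) τA) := ht'
        rw [outBig_comp] at ht'2
        obtain ⟨u, hu, rfl⟩ := ht'2
        exact (ih1 u).mpr (hout1 u hu)
      · have ht'2 : t' ∈ outBig Msub wit (Sum.inr ⟨σf, t⟩)
            (uplusJA A B (injJA (injA Msub σf) τA) (injJA (injA Msub σf) τB)) := ht'
        rw [uplusJA_injJA, outBig_comp] at ht'2
        obtain ⟨u, hu, rfl⟩ := ht'2
        exact (ih2 u).mpr (hout2 u hu)

lemma satC_lab_eq {M M' : CGM Agt AP} {s : M.St} {s' : M'.St} (h : M.lab s = M'.lab s') :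
    ∀ {γ : FormC Agt AP}, IsElemConjC γ → (satC M s γ ↔ satC M' s' γ) := by
  intro γ hγ
  induction hγ with
  | lit hl =>
    cases hl with
    | atom p => simp [satC, h]
    | natom p => simp [satC, h]
  | and h1 h2 ih1 ih2 => simp only [satC]; rw [ih1, ih2]

end Model2

end Realize
/-- Realizability of regular abstract game forms: every regular abstract game form
(over a nonempty action set `Act0`, with a satisfiable and monotonic `force`)
together with a satisfiable elementary conjunction `γ` is realized by some
pointed concurrent game model. -/
theorem realizability_of_regular_abstract_game_forms
    {Agt AP : Type} [Fintype Agt] [Nonempty Agt] [Countable AP]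
    (Act0 : Type) [Nonempty Act0]
    (force : (Agt → Option Act0) → Set (FormC Agt AP))
    (hforce_sat : ∀ σ : Agt → Option Act0,
      ∃ (M : CGM Agt AP) (s : M.St), ∀ χ ∈ force σ, satC M s χ)
    (hforce_mono : ∀ σ σ' : Agt → Option Act0, subJA σ σ' → force σ ⊆ force σ')
    (γ : FormC Agt AP) (hγ : IsElemConjC γ)
    (hγsat : ∃ (M : CGM Agt AP) (s : M.St), satC M s γ) :
    ∃ (M : CGM Agt AP) (s0 : M.St) (f : Act0 → M.Act),
      Function.Injective f ∧
      (∀ A : Set Agt, M.aja s0 A =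
        {σ' | ∃ σ : Agt → Option Act0,
          (∀ a, (σ a).isSome ↔ a ∈ A) ∧ σ' = fun a => (σ a).map f}) ∧
      satC M s0 γ ∧
      (∀ σ : Agt → Option Act0, ∀ χ ∈ force σ,
        ∀ t ∈ M.out s0 (fun a => (σ a).map f), satC M t χ) := by
  classical
  obtain ⟨Mγ, sγ, hsγ⟩ := hγsat
  choose Msub wit witSpec using fun σf : Agt → Act0 => hforce_sat (fun a => some (σf a))
  refine ⟨Realize.bigM Msub wit (Mγ.lab sγ), Sum.inl (), Sum.inl, Sum.inl_injective, ?_, ?_, ?_⟩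
  · intro A; rfl
  · exact (Realize.satC_lab_eq (M := Realize.bigM Msub wit (Mγ.lab sγ)) (M' := Mγ)
      (s := Sum.inl ()) (s' := sγ) rfl hγ).mpr hsγ
  · intro σ χ hχ t ht
    have ht2 : t ∈ Realize.outBig Msub wit (Sum.inl ()) (Realize.injJA Sum.inl σ) := ht
    obtain ⟨σf, hsub, rfl⟩ := ht2
    have hsub2 : subJA σ (fun a => some (σf a)) := by
      intro a x hx
      have h2 := hsub a (Sum.inl x) (by simp [Realize.injJA, hx])
      simp only [Realize.Fmap, Option.some.injEq, Sum.inl.injEq] at h2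
      simp [h2]
    have hχ2 : χ ∈ force (fun a => some (σf a)) := hforce_mono _ _ hsub2 hχ
    exact (Realize.satC_bigM Msub wit (Mγ.lab sγ) σf χ (wit σf)).mpr (witSpec σf χ hχ2)
end

section
/- For every concurrent game model M, state s, coalitions A, B, and formulas φ, ψ of Φ_CCSR: (1) M,s ⊨ ⟨A⟩φ⟨B⟩_c ψ iff A∪B has a joint action σ ∈ aja(s, A∪B) such that M,t ⊨ φ for every t ∈ out(s, σ|_A) and M,t ⊨ ψ for every t ∈ out(s, σ), where σ|_A is the restriction of σ to A; (2) the formulas ⟨A⟩φ⟨B⟩_c ψ, ⟨A⟩φ⟨B⟩_c (φ∧ψ), ⟨A⟩φ⟨B−A⟩_c ψ, and ⟨A⟩φ⟨A∪B⟩_c ψ are pairwise equivalent (true at exactly the same pointed models); (3) M,s ⊨ ⟨A⟩φ⟨∅⟩_c ⊤ iff there is σ_A ∈ aja(s,A) such that M,t ⊨ φ for every t ∈ out(s,σ_A) (i.e., the coalition-logic operator ⟨A⟩φ is definable as ⟨A⟩φ⟨∅⟩_c ⊤). -/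
open scoped Classical

-- helper lemmas to insert above the theorem
section Helpers

variable {Agt AP : Type} {M : CGM Agt AP}

lemma mem_aja_empty {s : M.St} {τ : Agt → Option M.Act} (h : τ ∈ M.aja s ∅) :
    τ = fun _ => none := by
  funext a
  have hd := M.aja_dom s ∅ τ h a
  simp only [Set.mem_empty_iff_false, iff_false] at hd
  exact Option.not_isSome_iff_eq_none.mp hd

lemma none_mem_aja_empty (s : M.St) : (fun _ => none) ∈ M.aja s (∅ : Set Agt) := by
  obtain ⟨τ, hτ⟩ := M.aja_ne s ∅
  have := mem_aja_empty hτ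
  rwa [this] at hτ

lemma restrict_singleton_mem {s : M.St} {C : Set Agt} {σ : Agt → Option M.Act}
    (hσ : σ ∈ M.aja s C) {a : Agt} (ha : a ∈ C) :
    restrictJA σ {a} ∈ M.aja s {a} :=
  (M.aja_glue s C σ ⟨a, ha⟩ (M.aja_dom s C σ hσ)).mp hσ a ha

lemma restrict_dom {s : M.St} {C : Set Agt} {σ : Agt → Option M.Act}
    (hσ : σ ∈ M.aja s C) (A : Set Agt) (hAC : A ⊆ C) :
    ∀ a, ((restrictJA σ A) a).isSome ↔ a ∈ A := by
  intro a
  unfold restrictJA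
  by_cases h : a ∈ A
  · simp only [h, if_pos, iff_true]
    exact (M.aja_dom s C σ hσ a).mpr (hAC h)
  · simp [h]

lemma restrict_restrict {σ : Agt → Option M.Act} {A : Set Agt} {a : Agt} (ha : a ∈ A) :
    restrictJA (restrictJA σ A) {a} = restrictJA σ {a} := by
  funext b
  unfold restrictJA
  by_cases hb : b ∈ ({a} : Set Agt)
  · rcases hb with rfl
    simp [ha]
  · simp [hb]

lemma restrict_mem {s : M.St} {C : Set Agt} {σ : Agt → Option M.Act}
    (hσ : σ ∈ M.aja s C) {A : Set Agt} (hAC : A ⊆ C) :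
    restrictJA σ A ∈ M.aja s A := by
  rcases Set.eq_empty_or_nonempty A with rfl | hA
  · have : restrictJA σ (∅ : Set Agt) = fun _ => none := by
      funext a; simp [restrictJA]
    rw [this]
    exact none_mem_aja_empty s
  · rw [M.aja_glue s A _ hA (restrict_dom hσ A hAC)]
    intro a ha
    rw [restrict_restrict ha]
    exact restrict_singleton_mem hσ (hAC ha)

lemma uplus_dom {s : M.St} {A B : Set Agt} {σA σB : Agt → Option M.Act}
    (hA : σA ∈ M.aja s A) (hB : σB ∈ M.aja s B) :
    ∀ a, ((uplusJA A B σA σB) a).isSome ↔ a ∈ A ∪ B := by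
  intro a
  unfold uplusJA
  by_cases ha : a ∈ A
  · simp only [ha, if_pos, Set.mem_union, iff_true, true_or]
    exact (M.aja_dom s A σA hA a).mpr ha
  · by_cases hb : a ∈ B
    · simp only [ha, hb, if_neg, if_pos, Set.mem_union]
      simp only [ha, false_or, hb, iff_true]
      exact (M.aja_dom s B σB hB a).mpr hb
    · simp [ha, hb]

lemma uplus_mem {s : M.St} {A B : Set Agt} {σA σB : Agt → Option M.Act}
    (hA : σA ∈ M.aja s A) (hB : σB ∈ M.aja s B) :
    uplusJA A B σA σB ∈ M.aja s (A ∪ B) := by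
  rcases Set.eq_empty_or_nonempty (A ∪ B) with hU | hU
  · have hAe : A = ∅ := Set.union_empty_iff.mp hU |>.1
    have hBe : B = ∅ := Set.union_empty_iff.mp hU |>.2
    subst hAe; subst hBe
    have : uplusJA (∅ : Set Agt) ∅ σA σB = fun _ => none := by
      funext a; simp [uplusJA]
    rw [Set.union_empty, this]
    exact none_mem_aja_empty s
  · rw [M.aja_glue s (A ∪ B) _ hU (uplus_dom hA hB)]
    intro a ha
    by_cases haA : a ∈ A
    · have : restrictJA (uplusJA A B σA σB) {a} = restrictJA σA {a} := by
        funext b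
        unfold restrictJA uplusJA
        by_cases hb : b ∈ ({a} : Set Agt)
        · rcases hb with rfl; simp [haA]
        · simp [hb]
      rw [this]
      exact restrict_singleton_mem hA haA
    · have haB : a ∈ B := ha.resolve_left haA
      have : restrictJA (uplusJA A B σA σB) {a} = restrictJA σB {a} := by
        funext b
        unfold restrictJA uplusJA
        by_cases hb : b ∈ ({a} : Set Agt)
        · rcases hb with rfl; simp [haA, haB]
        · simp [hb]
      rw [this]
      exact restrict_singleton_mem hB haB

lemma restrict_uplus {s : M.St} {A B : Set Agt} {σA σB : Agt → Option M.Act}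
    (hA : σA ∈ M.aja s A) :
    restrictJA (uplusJA A B σA σB) A = σA := by
  funext a
  unfold restrictJA uplusJA
  by_cases ha : a ∈ A
  · simp [ha]
  · simp only [ha, if_neg, if_false]
    have := (M.aja_dom s A σA hA a)
    simp only [ha, iff_false] at this
    exact (Option.not_isSome_iff_eq_none.mp this).symm

lemma subJA_uplus_left {s : M.St} {A : Set Agt} (B : Set Agt) {σA : Agt → Option M.Act}
    (hA : σA ∈ M.aja s A) (σB : Agt → Option M.Act) :
    subJA σA (uplusJA A B σA σB) := by
  intro a x hx
  have ha : a ∈ A := (M.aja_dom s A σA hA a).mp (by simp [hx])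
  simp [uplusJA, ha, hx]

lemma out_mono {s : M.St} {A C : Set Agt} (hAC : A ⊆ C) {σA σ : Agt → Option M.Act}
    (hA : σA ∈ M.aja s A) (hC : σ ∈ M.aja s C) (hsub : subJA σA σ) :
    M.out s σ ⊆ M.out s σA := by
  by_cases hAu : A = Set.univ
  · subst hAu
    have hCu : C = Set.univ := Set.univ_subset_iff.mp hAC
    subst hCu
    have : σA = σ := by
      funext a
      have h1 := (M.aja_dom s _ σA hA a).mpr (Set.mem_univ a)
      obtain ⟨x, hx⟩ := Option.isSome_iff_exists.mp h1
      rw [hx, hsub a x hx]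
    rw [this]
  · intro t ht
    rw [M.out_glue s A hAu σA hA]
    by_cases hCu : C = Set.univ
    · subst hCu
      exact ⟨σ, hC, hsub, ht⟩
    · rw [M.out_glue s C hCu σ hC] at ht
      obtain ⟨σ', hσ', hs', ht'⟩ := ht
      exact ⟨σ', hσ', fun a x hx => hs' a x (hsub a x hx), ht'⟩

lemma coop_iff {s : M.St} {A B : Set Agt} {φ ψ : FormC Agt AP} :
    satC M s (FormC.coop A B φ ψ) ↔
      ∃ σ ∈ M.aja s (A ∪ B),
        (∀ t ∈ M.out s (restrictJA σ A), satC M t φ) ∧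
        (∀ t ∈ M.out s σ, satC M t ψ) := by
  simp only [satC]
  constructor
  · rintro ⟨σA, hA, hφ, σB, hB, hψ⟩
    refine ⟨uplusJA A B σA σB, uplus_mem hA hB, ?_, hψ⟩
    rwa [restrict_uplus hA]
  · rintro ⟨σ, hσ, hφ, hψ⟩
    refine ⟨restrictJA σ A, restrict_mem hσ Set.subset_union_left, hφ,
      restrictJA σ B, restrict_mem hσ Set.subset_union_right, ?_⟩
    have heq : uplusJA A B (restrictJA σ A) (restrictJA σ B) = σ := by
      funext a
      unfold uplusJA restrictJA
      by_cases ha : a ∈ A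
      · simp [ha]
      · by_cases hb : a ∈ B
        · simp [ha, hb]
        · simp only [ha, hb, if_neg, if_false]
          have := M.aja_dom s (A ∪ B) σ hσ a
          simp only [Set.mem_union, ha, hb, or_self, iff_false] at this
          exact (Option.not_isSome_iff_eq_none.mp this).symm
    rwa [heq]

end Helpers

/-- Basic semantic facts about the cooperation operator ⟨A⟩φ⟨B⟩_c ψ of Φ_CCSR. -/
theorem coop_operator_facts
    {Agt AP : Type} [Fintype Agt] [Nonempty Agt] [Countable AP]
    (M : CGM Agt AP) (s : M.St) (A B : Set Agt) (φ ψ : FormC Agt AP) :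
    (satC M s (FormC.coop A B φ ψ) ↔
      ∃ σ ∈ M.aja s (A ∪ B),
        (∀ t ∈ M.out s (restrictJA σ A), satC M t φ) ∧
        (∀ t ∈ M.out s σ, satC M t ψ)) ∧
    (satC M s (FormC.coop A B φ ψ) ↔ satC M s (FormC.coop A B φ (FormC.and φ ψ))) ∧
    (satC M s (FormC.coop A B φ ψ) ↔ satC M s (FormC.coop A (B \ A) φ ψ)) ∧
    (satC M s (FormC.coop A B φ ψ) ↔ satC M s (FormC.coop A (A ∪ B) φ ψ)) ∧
    (satC M s (FormC.coop A ∅ φ FormC.top) ↔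
      ∃ σA ∈ M.aja s A, ∀ t ∈ M.out s σA, satC M t φ) := by
  refine ⟨coop_iff, ?_, ?_, ?_, ?_⟩
  · simp only [satC]
    constructor
    · rintro ⟨σA, hA, hφ, σB, hB, hψ⟩
      refine ⟨σA, hA, hφ, σB, hB, fun t ht => ⟨?_, hψ t ht⟩⟩
      exact hφ t (out_mono Set.subset_union_left hA (uplus_mem hA hB)
        (subJA_uplus_left B hA σB) ht)
    · rintro ⟨σA, hA, hφ, σB, hB, hψ⟩
      exact ⟨σA, hA, hφ, σB, hB, fun t ht => (hψ t ht).2⟩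
  · rw [coop_iff, coop_iff, Set.union_diff_self]
  · rw [coop_iff, coop_iff, ← Set.union_assoc, Set.union_self]
  · simp only [satC]
    constructor
    · rintro ⟨σA, hA, hφ, -⟩
      exact ⟨σA, hA, hφ⟩
    · rintro ⟨σA, hA, hφ⟩
      exact ⟨σA, hA, hφ, fun _ => none, none_mem_aja_empty s, fun t _ => trivial⟩
end

section
/- Downward validity for CL_LI: let γ be an elementary disjunction, NI a finite index set, and for each i ∈ NI let A_i be a coalition and φ_i ∈ Φ_CL_LI, and let SD = γ ∨ ⋁_{i∈NI} [A_i]φ_i. If ⊨ SD, then either (a) ⊨ γ, or (b) there is a neat subset NI' of NI such that ⊨ ⋁_{i∈NI'} φ_i (where the empty disjunction is ⊥). -/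
open scoped Classical

/-- The liability fragment Φ_CL_LI. -/
inductive FormLI (Agt AP : Type) : Type
  | top : FormLI Agt AP
  | bot : FormLI Agt AP
  | atom : AP → FormLI Agt AP
  | natom : AP → FormLI Agt AP
  | and : FormLI Agt AP → FormLI Agt AP → FormLI Agt AP
  | or : FormLI Agt AP → FormLI Agt AP → FormLI Agt AP
  | box : Set Agt → FormLI Agt AP → FormLI Agt AP

/-- Satisfaction for Φ_CL_LI. -/
def satLI {Agt AP : Type} (M : CGM Agt AP) : M.St → FormLI Agt AP → Prop
  | _, FormLI.top => True
  | _, FormLI.bot => False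
  | s, FormLI.atom p => p ∈ M.lab s
  | s, FormLI.natom p => p ∉ M.lab s
  | s, FormLI.and φ ψ => satLI M s φ ∧ satLI M s ψ
  | s, FormLI.or φ ψ => satLI M s φ ∨ satLI M s ψ
  | s, FormLI.box A φ => ∀ σ ∈ M.aja s A, ∃ t ∈ M.out s σ, satLI M t φ

/-- Validity for Φ_CL_LI. -/
def validLI {Agt AP : Type} (φ : FormLI Agt AP) : Prop :=
  ∀ (M : CGM Agt AP) (s : M.St), satLI M s φ

/-- Propositional evaluation, treating box formulas as atoms (valuation `w`). -/
def evalLI {Agt AP : Type} (v : AP → Prop) (w : FormLI Agt AP → Prop) :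
    FormLI Agt AP → Prop
  | FormLI.top => True
  | FormLI.bot => False
  | FormLI.atom p => v p
  | FormLI.natom p => ¬ v p
  | FormLI.and φ ψ => evalLI v w φ ∧ evalLI v w ψ
  | FormLI.or φ ψ => evalLI v w φ ∨ evalLI v w ψ
  | FormLI.box A φ => w (FormLI.box A φ)

/-- Derivability in the axiomatic system for CL_LI. -/
inductive DerLI {Agt AP : Type} : FormLI Agt AP → Prop
  | r1 (Γ : List (FormLI Agt AP)) (ψ : FormLI Agt AP) :
      (∀ φ ∈ Γ, DerLI φ) →
      (∀ (v : AP → Prop) (w : FormLI Agt AP → Prop),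
        (∀ φ ∈ Γ, evalLI v w φ) → evalLI v w ψ) →
      DerLI ψ
  | r2 (A : Set Agt) (φ : FormLI Agt AP) : DerLI φ → DerLI (FormLI.box A φ)
  | r3 (A B : Set Agt) (φ ψ χ : FormLI Agt AP) : A ∩ B = ∅ →
      DerLI (FormLI.or (FormLI.box (A ∪ B) (FormLI.or φ ψ)) χ) →
      DerLI (FormLI.or (FormLI.box A φ) (FormLI.or (FormLI.box B ψ) χ))

/-- Literals of Φ_CL_LI. -/
inductive IsLitLI {Agt AP : Type} : FormLI Agt AP → Prop
  | atom (p : AP) : IsLitLI (FormLI.atom p)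
  | natom (p : AP) : IsLitLI (FormLI.natom p)

/-- Elementary disjunctions (⊥ is the empty disjunction). -/
inductive IsElemDisjLI {Agt AP : Type} : FormLI Agt AP → Prop
  | bot : IsElemDisjLI FormLI.bot
  | lit {φ : FormLI Agt AP} : IsLitLI φ → IsElemDisjLI φ
  | or {φ ψ : FormLI Agt AP} : IsElemDisjLI φ → IsElemDisjLI ψ →
      IsElemDisjLI (FormLI.or φ ψ)

/-- Finite disjunction of a list of formulas (empty disjunction is ⊥). -/
def bigOrLI {Agt AP : Type} : List (FormLI Agt AP) → FormLI Agt AP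
  | [] => FormLI.bot
  | φ :: l => FormLI.or φ (bigOrLI l)

namespace DVaux

variable {Agt AP : Type}

lemma sat_bigOr_iff (M : CGM Agt AP) (s : M.St) (l : List (FormLI Agt AP)) :
    satLI M s (bigOrLI l) ↔ ∃ ψ ∈ l, satLI M s ψ := by
  induction l with
  | nil => simp [bigOrLI, satLI]
  | cons a l ih => simp [bigOrLI, satLI, ih]

lemma sat_elem_iff {M M' : CGM Agt AP} {s : M.St} {s' : M'.St}
    (h : M.lab s = M'.lab s') {γ : FormLI Agt AP} (hγ : IsElemDisjLI γ) :
    satLI M s γ ↔ satLI M' s' γ := by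
  induction hγ with
  | bot => exact Iff.rfl
  | lit hl =>
    cases hl with
    | atom p => simp [satLI, h]
    | natom p => simp [satLI, h]
  | or h1 h2 ih1 ih2 => simp only [satLI]; rw [ih1, ih2]

section Fuse

variable {ι : Type} (NI : Finset ι) (A : ι → Set Agt)
  (Wm : Finset ι → CGM Agt AP) (pt : ∀ N, (Wm N).St) (lab0 : Set AP)

/-- The action type of the fused model. -/
abbrev FAct : Type := ι ⊕ (Σ N : Finset ι, (Wm N).Act)

/-- The state type of the fused model. -/
abbrev FSt : Type := Unit ⊕ (Σ N : Finset ι, (Wm N).St)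

def embA (N : Finset ι) (x : (Wm N).Act) : FAct Wm := Sum.inr ⟨N, x⟩

lemma embA_inj {N : Finset ι} {x y : (Wm N).Act} (h : embA Wm N x = embA Wm N y) :
    x = y := by
  simpa [embA] using h

def embJA (N : Finset ι) (τ : Agt → Option ((Wm N).Act)) : Agt → Option (FAct Wm) :=
  fun a => (τ a).map (embA Wm N)

lemma embJA_isSome {N : Finset ι} (τ : Agt → Option ((Wm N).Act)) (a : Agt) :
    (embJA Wm N τ a).isSome ↔ (τ a).isSome := by
  simp [embJA]

lemma embJA_inj {N : Finset ι} {τ τ' : Agt → Option ((Wm N).Act)}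
    (h : embJA Wm N τ = embJA Wm N τ') : τ = τ' := by
  funext a
  have := congrFun h a
  cases h1 : τ a <;> cases h2 : τ' a <;> simp_all [embJA]
  exact embA_inj Wm this

lemma subJA_embJA {N : Finset ι} {τ τ' : Agt → Option ((Wm N).Act)} :
    subJA (embJA Wm N τ) (embJA Wm N τ') ↔ subJA τ τ' := by
  constructor
  · intro h a x hx
    have := h a (embA Wm N x) (by simp [embJA, hx])
    simp only [embJA, Option.map_eq_some_iff] at this
    obtain ⟨y, hy, hxy⟩ := this
    rw [hy]; rw [embA_inj Wm hxy]
  · intro h a x hx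
    simp only [embJA, Option.map_eq_some_iff] at hx ⊢
    obtain ⟨y, hy, hxy⟩ := hx
    exact ⟨y, h a y hy, hxy⟩

lemma restrict_embJA {N : Finset ι} (τ : Agt → Option ((Wm N).Act)) (B : Set Agt) :
    restrictJA (embJA Wm N τ) B = embJA Wm N (restrictJA τ B) := by
  funext a
  by_cases h : a ∈ B <;> simp [restrictJA, embJA, h]

/-- the set of indices "selected" by a full profile. -/
noncomputable def Nof (σ : Agt → Option (FAct Wm)) : Finset ι :=
  NI.filter (fun i => ∀ a ∈ A i, σ a = some (Sum.inl i))

lemma mem_Nof {σ : Agt → Option (FAct Wm)} {i : ι} :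
    i ∈ Nof NI A Wm σ ↔ i ∈ NI ∧ ∀ a ∈ A i, σ a = some (Sum.inl i) := by
  rw [Nof, Finset.mem_filter]

lemma Nof_subset (σ : Agt → Option (FAct Wm)) : Nof NI A Wm σ ⊆ NI :=
  Finset.filter_subset _ _

lemma Nof_neat (σ : Agt → Option (FAct Wm)) :
    ∀ i ∈ Nof NI A Wm σ, ∀ i' ∈ Nof NI A Wm σ, i ≠ i' → A i ∩ A i' = ∅ := by
  intro i hi i' hi' hne
  rw [Set.eq_empty_iff_forall_notMem]
  rintro a ⟨ha, ha'⟩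
  rw [Nof, Finset.mem_filter] at hi hi'
  have h1 := hi.2 a ha
  have h2 := hi'.2 a ha'
  rw [h1] at h2
  exact hne (by simpa using h2)

noncomputable def fAja (s : FSt Wm) (B : Set Agt) : Set (Agt → Option (FAct Wm)) :=
  match s with
  | Sum.inl _ => {σ | ∀ a, (σ a).isSome ↔ a ∈ B}
  | Sum.inr ⟨N, t⟩ => {σ | ∃ τ ∈ (Wm N).aja t B, σ = embJA Wm N τ}

noncomputable def fOut (s : FSt Wm) (σ : Agt → Option (FAct Wm)) : Set (FSt Wm) :=
  match s with
  | Sum.inl _ => {s' | ∃ σ', (∀ a, (σ' a).isSome) ∧ subJA σ σ' ∧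
      s' = Sum.inr ⟨Nof NI A Wm σ', pt (Nof NI A Wm σ')⟩}
  | Sum.inr ⟨N, t⟩ => {s' | ∃ τ, σ = embJA Wm N τ ∧
      ∃ u ∈ (Wm N).out t τ, s' = Sum.inr ⟨N, u⟩}

noncomputable def fLab (s : FSt Wm) : Set AP :=
  match s with
  | Sum.inl _ => lab0
  | Sum.inr ⟨N, t⟩ => (Wm N).lab t

/-- any joint action has a total extension. -/
lemma exists_total_ext (σ : Agt → Option (FAct Wm)) :
    ∃ σ', (∀ a, (σ' a).isSome) ∧ subJA σ σ' := by
  classical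
  obtain ⟨d⟩ : Nonempty (FAct Wm) := ⟨Sum.inr ⟨∅, Classical.choice (Wm ∅).act_ne⟩⟩
  refine ⟨fun a => some ((σ a).getD d), fun a => rfl, ?_⟩
  intro a x hx
  simp [hx]

lemma total_ext_eq {σ σ' : Agt → Option (FAct Wm)} (htot : ∀ a, (σ a).isSome)
    (h : subJA σ σ') : σ' = σ := by
  funext a
  obtain ⟨x, hx⟩ := Option.isSome_iff_exists.mp (htot a)
  rw [hx, h a x hx]

noncomputable def fuse : CGM Agt AP where
  St := FSt Wm
  Act := FAct Wm
  st_ne := ⟨Sum.inl ()⟩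
  act_ne := ⟨Sum.inr ⟨∅, Classical.choice (Wm ∅).act_ne⟩⟩
  aja := fAja Wm
  out := fOut NI A Wm pt
  lab := fLab Wm lab0
  aja_ne := by
    rintro (u | ⟨N, t⟩) B
    · obtain ⟨d⟩ : Nonempty (FAct Wm) := ⟨Sum.inr ⟨∅, Classical.choice (Wm ∅).act_ne⟩⟩
      refine ⟨fun a => if a ∈ B then some d else none, ?_⟩
      intro a
      by_cases h : a ∈ B <;> simp [fAja, h]
    · obtain ⟨τ, hτ⟩ := (Wm N).aja_ne t B
      exact ⟨embJA Wm N τ, τ, hτ, rfl⟩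
  aja_dom := by
    rintro (u | ⟨N, t⟩) B σ hσ a
    · exact hσ a
    · obtain ⟨τ, hτ, rfl⟩ := hσ
      rw [embJA_isSome]
      exact (Wm N).aja_dom t B τ hτ a
  aja_glue := by
    rintro (u | ⟨N, t⟩) B σ hBne hdom
    · constructor
      · intro _ a ha b
        by_cases hb : b ∈ ({a} : Set Agt)
        · simp only [Set.mem_singleton_iff] at hb
          subst hb
          simp only [restrictJA, Set.mem_singleton_iff, if_pos rfl]
          simpa [hdom b] using ha
        · simp only [Set.mem_singleton_iff] at hb
          simp [restrictJA, hb, fAja]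
      · intro _
        exact hdom
    · constructor
      · rintro ⟨τ, hτ, rfl⟩ a ha
        rw [restrict_embJA]
        have hτdom := (Wm N).aja_dom t B τ hτ
        have := ((Wm N).aja_glue t B τ hBne hτdom).mp hτ a ha
        exact ⟨restrictJA τ {a}, this, rfl⟩
      · intro h
        -- reconstruct the inner joint action
        have key : ∀ a ∈ B, ∃ y, σ a = some (Sum.inr ⟨N, y⟩) := by
          intro a ha
          obtain ⟨τa, hτa, heq⟩ := h a ha
          have h1 : (τa a).isSome := by
            rw [(Wm N).aja_dom t {a} τa hτa a]; exact rfl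
          obtain ⟨y, hy⟩ := Option.isSome_iff_exists.mp h1
          have h2 := congrFun heq a
          simp only [restrictJA, Set.mem_singleton_iff, if_true, if_pos rfl] at h2
          refine ⟨y, ?_⟩
          rw [h2, embJA, hy]
          rfl
        set τ : Agt → Option ((Wm N).Act) :=
          fun a => if hc : ∃ y, σ a = some (Sum.inr ⟨N, y⟩) then some hc.choose
            else none with hτdef
        have hτdom : ∀ a, (τ a).isSome ↔ a ∈ B := by
          intro a
          constructor
          · intro hs
            rw [hτdef] at hs
            by_cases hc : ∃ y, σ a = some (Sum.inr ⟨N, y⟩)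
            · rw [← hdom a, hc.choose_spec]; rfl
            · simp [hc] at hs
          · intro ha
            rw [hτdef]
            simp [key a ha]
        have hemb : σ = embJA Wm N τ := by
          funext a
          by_cases ha : a ∈ B
          · have hc : ∃ y, σ a = some (Sum.inr ⟨N, y⟩) := key a ha
            rw [hc.choose_spec]
            simp [embJA, hτdef, hc, embA]
          · have h1 : σ a = none := by
              rw [← Option.not_isSome_iff_eq_none, hdom a]; exact ha
            have h2 : τ a = none := by
              rw [← Option.not_isSome_iff_eq_none, hτdom a]; exact ha
            simp [embJA, h1, h2]
        have hrest : ∀ a ∈ B, restrictJA τ {a} ∈ (Wm N).aja t {a} := by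
          intro a ha
          obtain ⟨τa, hτa, heq⟩ := h a ha
          have : restrictJA τ {a} = τa := by
            have heq2 : embJA Wm N (restrictJA τ {a}) = embJA Wm N τa := by
              rw [← restrict_embJA, ← hemb, heq]
            exact embJA_inj Wm heq2
          rw [this]; exact hτa
        exact ⟨τ, ((Wm N).aja_glue t B τ hBne hτdom).mpr hrest, hemb⟩
  out_univ := by
    rintro (u | ⟨N, t⟩) σ hσ
    · have htot : ∀ a, (σ a).isSome := fun a => (hσ a).mpr (Set.mem_univ a)
      refine ⟨Sum.inr ⟨Nof NI A Wm σ, pt (Nof NI A Wm σ)⟩, ?_⟩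
      ext s'
      constructor
      · rintro ⟨σ', htot', hsub, rfl⟩
        rw [total_ext_eq Wm htot hsub]
        rfl
      · rintro rfl
        exact ⟨σ, htot, fun a x hx => hx, rfl⟩
    · obtain ⟨τ, hτ, rfl⟩ := hσ
      obtain ⟨v, hv⟩ := (Wm N).out_univ t τ hτ
      refine ⟨Sum.inr ⟨N, v⟩, ?_⟩
      ext s'
      constructor
      · rintro ⟨τ', heq, u, hu, rfl⟩
        rw [← embJA_inj Wm heq, hv] at hu
        rw [hu]
        rfl
      · rintro rfl
        exact ⟨τ, rfl, v, by rw [hv]; rfl, rfl⟩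
  out_univ_not := by
    rintro (u | ⟨N, t⟩) σ htot hσ
    · exact absurd (fun a => ⟨fun _ => Set.mem_univ a, fun _ => htot a⟩) hσ
    · ext s'
      simp only [Set.mem_empty_iff_false, iff_false]
      rintro ⟨τ, rfl, u', hu', rfl⟩
      have hτtot : ∀ a, (τ a).isSome := by
        intro a
        rw [← embJA_isSome Wm τ a]; exact htot a
      have hτnot : τ ∉ (Wm N).aja t Set.univ := by
        intro hc
        exact hσ ⟨τ, hc, rfl⟩
      rw [(Wm N).out_univ_not t τ hτtot hτnot] at hu'
      exact hu'
  out_glue := by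
    rintro (u | ⟨N, t⟩) B hBne σ hσ
    · ext s'
      constructor
      · rintro ⟨σ', htot', hsub, rfl⟩
        refine ⟨σ', fun a => ⟨fun _ => Set.mem_univ a, fun _ => htot' a⟩, hsub,
          σ', htot', fun a x hx => hx, rfl⟩
      · rintro ⟨σ', hσ'univ, hsub, σ'', htot'', hsub'', rfl⟩
        exact ⟨σ'', htot'', fun a x hx => hsub'' a x (hsub a x hx), rfl⟩
    · obtain ⟨τ, hτ, rfl⟩ := hσ
      have hglue := (Wm N).out_glue t B hBne τ hτ
      ext s'
      constructor
      · rintro ⟨τ₀, heq, u', hu', rfl⟩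
        rw [← embJA_inj Wm heq] at hu'
        rw [hglue] at hu'
        obtain ⟨τ', hτ', hsubτ, hu''⟩ := hu'
        exact ⟨embJA Wm N τ', ⟨τ', hτ', rfl⟩, (subJA_embJA Wm).mpr hsubτ,
          τ', rfl, u', hu'', rfl⟩
      · rintro ⟨σ', ⟨τ', hτ', rfl⟩, hsub, τ'', heq'', u', hu', rfl⟩
        rw [← embJA_inj Wm heq''] at hu'
        refine ⟨τ, rfl, u', ?_, rfl⟩
        rw [hglue]
        exact ⟨τ', hτ', (subJA_embJA Wm).mp hsub, hu'⟩
  out_not := by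
    rintro (u | ⟨N, t⟩) B σ hdom hBne hσ
    · exact absurd hdom hσ
    · ext s'
      simp only [Set.mem_empty_iff_false, iff_false]
      rintro ⟨τ, rfl, u', hu', rfl⟩
      have hτdom : ∀ a, (τ a).isSome ↔ a ∈ B := by
        intro a
        rw [← embJA_isSome Wm τ a]; exact hdom a
      have hτnot : τ ∉ (Wm N).aja t B := fun hc => hσ ⟨τ, hc, rfl⟩
      rw [(Wm N).out_not t B τ hτdom hBne hτnot] at hu'
      exact hu'

lemma sat_fuse_inr (ψ : FormLI Agt AP) :
    ∀ (N : Finset ι) (t : (Wm N).St),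
      satLI (fuse NI A Wm pt lab0) (Sum.inr ⟨N, t⟩) ψ ↔ satLI (Wm N) t ψ := by
  induction ψ with
  | top => intro N t; exact Iff.rfl
  | bot => intro N t; exact Iff.rfl
  | atom p => intro N t; exact Iff.rfl
  | natom p => intro N t; exact Iff.rfl
  | and φ ψ ih1 ih2 => intro N t; simp only [satLI]; rw [ih1, ih2]
  | or φ ψ ih1 ih2 => intro N t; simp only [satLI]; rw [ih1, ih2]
  | box B φ ih =>
    intro N t
    constructor
    · intro h τ hτ
      obtain ⟨s', hs', hsat⟩ := h (embJA Wm N τ) ⟨τ, hτ, rfl⟩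
      obtain ⟨τ', heq, u, hu, rfl⟩ := hs'
      rw [← embJA_inj Wm heq] at hu
      exact ⟨u, hu, (ih N u).mp hsat⟩
    · rintro h σ ⟨τ, hτ, rfl⟩
      obtain ⟨u, hu, hsat⟩ := h τ hτ
      exact ⟨Sum.inr ⟨N, u⟩, ⟨τ, rfl, u, hu, rfl⟩, (ih N u).mpr hsat⟩

end Fuse

end DVaux
/-- Downward validity for CL_LI: if a standard disjunction γ ∨ ⋁_{i∈NI}[A_i]φ_i is
valid, then γ is valid or some neat subset NI' of NI has ⋁_{i∈NI'}φ_i valid. -/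
theorem downward_validity_CL_LI
    {Agt AP : Type} [Fintype Agt] [Nonempty Agt] [Countable AP]
    {ι : Type} [DecidableEq ι]
    (γ : FormLI Agt AP) (hγ : IsElemDisjLI γ)
    (NI : Finset ι) (A : ι → Set Agt) (φ : ι → FormLI Agt AP)
    (hval : validLI (FormLI.or γ
      (bigOrLI (NI.toList.map fun i => FormLI.box (A i) (φ i))))) :
    validLI γ ∨
      ∃ NI' ⊆ NI, (∀ i ∈ NI', ∀ i' ∈ NI', i ≠ i' → A i ∩ A i' = ∅) ∧
        validLI (bigOrLI (NI'.toList.map fun i => φ i)) := by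
  by_contra hcon
  push_neg at hcon
  obtain ⟨hγv, hneat⟩ := hcon
  rw [validLI] at hγv
  push_neg at hγv
  obtain ⟨M0, s0, hs0⟩ := hγv
  have hch : ∀ N : Finset ι, ∃ (M : CGM Agt AP) (s : M.St),
      N ⊆ NI → (∀ i ∈ N, ∀ i' ∈ N, i ≠ i' → A i ∩ A i' = ∅) →
        ∀ i ∈ N, ¬ satLI M s (φ i) := by
    intro N
    by_cases h : N ⊆ NI ∧ (∀ i ∈ N, ∀ i' ∈ N, i ≠ i' → A i ∩ A i' = ∅)
    · have h2 := hneat N h.1 h.2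
      rw [validLI] at h2
      push_neg at h2
      obtain ⟨M, s, hsat⟩ := h2
      refine ⟨M, s, fun _ _ i hi hsi => hsat ?_⟩
      rw [DVaux.sat_bigOr_iff]
      exact ⟨φ i, List.mem_map_of_mem (Finset.mem_toList.mpr hi), hsi⟩
    · exact ⟨M0, s0, fun h1 h2 => absurd ⟨h1, h2⟩ h⟩
  choose Wm pt hW using hch
  set lab0 := M0.lab s0 with hlab0
  set F := DVaux.fuse NI A Wm pt lab0 with hF
  have hs := hval F (Sum.inl ())
  have hs' : satLI F (Sum.inl ()) γ ∨
      satLI F (Sum.inl ()) (bigOrLI (NI.toList.map fun i => FormLI.box (A i) (φ i))) := hs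
  rcases hs' with h | h
  · exact hs0 ((DVaux.sat_elem_iff (M := F) (M' := M0) (s := Sum.inl ()) (s' := s0) rfl hγ).mp h)
  · replace h := (DVaux.sat_bigOr_iff F _ _).mp h
    obtain ⟨ψ, hmem, hψ⟩ := h
    rw [List.mem_map] at hmem
    obtain ⟨i, hiNI, rfl⟩ := hmem
    rw [Finset.mem_toList] at hiNI
    set σi : Agt → Option (DVaux.FAct Wm) :=
      fun a => if a ∈ A i then some (Sum.inl i) else none with hσidef
    have hσi : σi ∈ F.aja (Sum.inl ()) (A i) := by
      intro a
      by_cases ha : a ∈ A i <;> simp [hσidef, ha]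
    obtain ⟨s', hout, hsat⟩ := hψ σi hσi
    obtain ⟨σ', htot, hsub, rfl⟩ := hout
    set N' := DVaux.Nof NI A Wm σ' with hN'
    have hiN' : i ∈ N' := by
      rw [hN', DVaux.mem_Nof]
      refine ⟨hiNI, fun a ha => ?_⟩
      exact hsub a (Sum.inl i) (by simp [hσidef, ha])
    have hno := hW N' (DVaux.Nof_subset NI A Wm σ') (DVaux.Nof_neat NI A Wm σ') i hiN'
    exact hno ((DVaux.sat_fuse_inr NI A Wm pt lab0 (φ i) N' (pt N')).mp hsat)
end

section
/- Upward derivability for CL_LI: let γ be an elementary disjunction, NI a finite index set, and for each i ∈ NI let A_i be a coalition and φ_i ∈ Φ_CL_LI, and let SD = γ ∨ ⋁_{i∈NI} [A_i]φ_i. If either (a) ⊢_CL_LI γ, or (b) there is a neat subset NI' of NI such that ⊢_CL_LI ⋁_{i∈NI'} φ_i, then ⊢_CL_LI SD. -/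
open scoped Classical

section Aux

variable {Agt AP ι : Type}

/-- One-premise instance of R1 (modus-ponens-like weakening). -/
lemma DerLI.mp1 (φ ψ : FormLI Agt AP) (h : DerLI φ)
    (himp : ∀ (v : AP → Prop) (w : FormLI Agt AP → Prop),
      evalLI v w φ → evalLI v w ψ) : DerLI ψ :=
  DerLI.r1 [φ] ψ (by simpa) (fun v w h' => himp v w (h' φ (by simp)))

/-- Nonempty union of coalitions along a list of indices. -/
def UnionL (A : ι → Set Agt) : ι → List ι → Set Agt
  | i, [] => A i
  | i, j :: l => A i ∪ UnionL A j l

/-- Nonempty disjunction along a list of indices. -/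
def OrL (φ : ι → FormLI Agt AP) : ι → List ι → FormLI Agt AP
  | i, [] => φ i
  | i, j :: l => FormLI.or (φ i) (OrL φ j l)

/-- Disjunction of boxes along a list, with a tail formula. -/
def BoxesOr (A : ι → Set Agt) (φ : ι → FormLI Agt AP) :
    ι → List ι → FormLI Agt AP → FormLI Agt AP
  | i, [], χ => FormLI.or (FormLI.box (A i) (φ i)) χ
  | i, j :: l, χ => FormLI.or (FormLI.box (A i) (φ i)) (BoxesOr A φ j l χ)

lemma eval_OrL (φ : ι → FormLI Agt AP) (v : AP → Prop) (w : FormLI Agt AP → Prop) :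
    ∀ (i : ι) (l : List ι),
      evalLI v w (OrL φ i l) ↔ ∃ k ∈ i :: l, evalLI v w (φ k)
  | i, [] => by simp [OrL, evalLI]
  | i, j :: l => by
      show evalLI v w (FormLI.or (φ i) (OrL φ j l)) ↔ _
      simp only [evalLI, eval_OrL φ v w j l, List.mem_cons]
      constructor
      · rintro (h | ⟨k, hk, hw⟩)
        · exact ⟨i, Or.inl rfl, h⟩
        · exact ⟨k, Or.inr hk, hw⟩
      · rintro ⟨k, (rfl | hk), hw⟩
        · exact Or.inl hw
        · exact Or.inr ⟨k, hk, hw⟩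

lemma eval_BoxesOr (A : ι → Set Agt) (φ : ι → FormLI Agt AP)
    (v : AP → Prop) (w : FormLI Agt AP → Prop) :
    ∀ (i : ι) (l : List ι) (χ : FormLI Agt AP),
      evalLI v w (BoxesOr A φ i l χ) ↔
        (∃ k ∈ i :: l, w (FormLI.box (A k) (φ k))) ∨ evalLI v w χ
  | i, [], χ => by simp [BoxesOr, evalLI]
  | i, j :: l, χ => by
      show evalLI v w (FormLI.or (FormLI.box (A i) (φ i)) (BoxesOr A φ j l χ)) ↔ _
      simp only [evalLI, eval_BoxesOr A φ v w j l χ, List.mem_cons]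
      constructor
      · rintro (hb | (⟨k, hk, hw⟩ | hχ))
        · exact Or.inl ⟨i, Or.inl rfl, hb⟩
        · exact Or.inl ⟨k, Or.inr hk, hw⟩
        · exact Or.inr hχ
      · rintro (⟨k, (rfl | hk), hw⟩ | hχ)
        · exact Or.inl hw
        · exact Or.inr (Or.inl ⟨k, hk, hw⟩)
        · exact Or.inr (Or.inr hχ)

lemma eval_bigOr (v : AP → Prop) (w : FormLI Agt AP → Prop) :
    ∀ (L : List (FormLI Agt AP)),
      evalLI v w (bigOrLI L) ↔ ∃ ψ ∈ L, evalLI v w ψ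
  | [] => by simp [bigOrLI, evalLI]
  | ψ :: L => by simp [bigOrLI, evalLI, eval_bigOr v w L]

lemma inter_UnionL (A : ι → Set Agt) (i : ι) :
    ∀ (j : ι) (l : List ι), (∀ k ∈ j :: l, A i ∩ A k = ∅) →
      A i ∩ UnionL A j l = ∅
  | j, [], h => by simpa [UnionL] using h j (by simp)
  | j, k :: l, h => by
      have h1 : A i ∩ A j = ∅ := h j (by simp)
      have h2 : A i ∩ UnionL A k l = ∅ :=
        inter_UnionL A i k l (fun m hm => h m (List.mem_cons_of_mem j hm))
      simp only [UnionL, Set.inter_union_distrib_left, h1, h2, Set.union_empty]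

/-- Key lemma: splitting a box over a union of pairwise disjoint coalitions. -/
lemma split_boxes (A : ι → Set Agt) (φ : ι → FormLI Agt AP) :
    ∀ (l : List ι) (i : ι), (i :: l).Pairwise (fun a b => A a ∩ A b = ∅) →
      ∀ χ : FormLI Agt AP,
        DerLI (FormLI.or (FormLI.box (UnionL A i l) (OrL φ i l)) χ) →
        DerLI (BoxesOr A φ i l χ)
  | [], i, _, χ, h => h
  | j :: l, i, hpw, χ, h => by
      rw [List.pairwise_cons] at hpw
      have hdisj : A i ∩ UnionL A j l = ∅ :=
        inter_UnionL A i j l (fun k hk => hpw.1 k hk)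
      have h1 : DerLI (FormLI.or (FormLI.box (A i) (φ i))
          (FormLI.or (FormLI.box (UnionL A j l) (OrL φ j l)) χ)) :=
        DerLI.r3 (A i) (UnionL A j l) (φ i) (OrL φ j l) χ hdisj
          (by simpa [UnionL, OrL] using h)
      have h2 : DerLI (FormLI.or (FormLI.box (UnionL A j l) (OrL φ j l))
          (FormLI.or (FormLI.box (A i) (φ i)) χ)) :=
        DerLI.mp1 _ _ h1 (by intro v w hv; simp [evalLI] at hv ⊢; tauto)
      have h3 : DerLI (BoxesOr A φ j l (FormLI.or (FormLI.box (A i) (φ i)) χ)) :=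
        split_boxes A φ l j hpw.2 _ h2
      exact DerLI.mp1 _ _ h3 (by
        intro v w hv
        rw [eval_BoxesOr] at hv
        show evalLI v w (BoxesOr A φ i (j :: l) χ)
        rw [eval_BoxesOr]
        simp only [evalLI] at hv
        rcases hv with ⟨k, hk, hw⟩ | (hb | hχ)
        · exact Or.inl ⟨k, List.mem_cons_of_mem i hk, hw⟩
        · exact Or.inl ⟨i, List.mem_cons_self, hb⟩
        · exact Or.inr hχ)

end Aux

/-- Upward derivability for CL_LI: if γ is derivable, or ⋁_{i∈NI'}φ_i is derivable
for some neat subset NI' of NI, then the standard disjunction γ ∨ ⋁_{i∈NI}[A_i]φ_i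
is derivable. -/
theorem upward_derivability_CL_LI
    {Agt AP : Type} [Fintype Agt] [Nonempty Agt] [Countable AP]
    {ι : Type} [DecidableEq ι]
    (γ : FormLI Agt AP) (hγ : IsElemDisjLI γ)
    (NI : Finset ι) (A : ι → Set Agt) (φ : ι → FormLI Agt AP)
    (h : DerLI γ ∨
      ∃ NI' ⊆ NI, (∀ i ∈ NI', ∀ i' ∈ NI', i ≠ i' → A i ∩ A i' = ∅) ∧
        DerLI (bigOrLI (NI'.toList.map fun i => φ i))) :
    DerLI (FormLI.or γ
      (bigOrLI (NI.toList.map fun i => FormLI.box (A i) (φ i)))) := by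
  rcases h with hder | ⟨NI', hsub, hneat, hder⟩
  · exact DerLI.mp1 _ _ hder (by intro v w hv; exact Or.inl hv)
  · rcases hl : NI'.toList with _ | ⟨i, l⟩
    · rw [hl] at hder
      simp only [List.map_nil, bigOrLI] at hder
      exact DerLI.mp1 _ _ hder (by intro v w hv; cases hv)
    · -- members of i :: l are in NI'
      have hmem : ∀ k ∈ i :: l, k ∈ NI' := by
        intro k hk; rw [← Finset.mem_toList, hl]; exact hk
      -- pairwise disjointness along the list
      have hpw : (i :: l).Pairwise (fun a b => A a ∩ A b = ∅) := by
        have hnd : (i :: l).Pairwise (· ≠ ·) := by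
          rw [← hl]; exact NI'.nodup_toList
        refine hnd.imp_of_mem ?_
        intro a b ha hb hab
        exact hneat a (hmem a ha) b (hmem b hb) hab
      -- derive OrL from the big disjunction
      rw [hl] at hder
      have h1 : DerLI (OrL φ i l) := by
        refine DerLI.mp1 _ _ hder ?_
        intro v w hv
        rw [eval_bigOr] at hv
        rw [eval_OrL]
        rcases hv with ⟨ψ, hψ, hev⟩
        rw [List.mem_map] at hψ
        rcases hψ with ⟨k, hk, rfl⟩
        exact ⟨k, hk, hev⟩
      have h2 : DerLI (FormLI.or (FormLI.box (UnionL A i l) (OrL φ i l)) γ) :=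
        DerLI.mp1 _ _ (DerLI.r2 (UnionL A i l) _ h1)
          (by intro v w hv; exact Or.inl hv)
      have h3 : DerLI (BoxesOr A φ i l γ) := split_boxes A φ l i hpw γ h2
      refine DerLI.mp1 _ _ h3 ?_
      intro v w hv
      rw [eval_BoxesOr] at hv
      show evalLI v w (FormLI.or _ _)
      simp only [evalLI]
      rcases hv with ⟨k, hk, hw⟩ | hγ'
      · right
        rw [eval_bigOr]
        refine ⟨FormLI.box (A k) (φ k), ?_, hw⟩
        rw [List.mem_map]
        exact ⟨k, by rw [Finset.mem_toList]; exact hsub (hmem k hk), rfl⟩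
      · exact Or.inl hγ'
end

section
/- Soundness of CL_AB: every formula of Φ_CL_AB derivable in the axiomatic system for CL_AB is valid, i.e., for every φ ∈ Φ_CL_AB, if ⊢_CL_AB φ then ⊨ φ. -/
open scoped Classical

/-- The ability fragment Φ_CL_AB. -/
inductive FormAB (Agt AP : Type) : Type
  | top : FormAB Agt AP
  | bot : FormAB Agt AP
  | atom : AP → FormAB Agt AP
  | natom : AP → FormAB Agt AP
  | and : FormAB Agt AP → FormAB Agt AP → FormAB Agt AP
  | or : FormAB Agt AP → FormAB Agt AP → FormAB Agt AP
  | dia : Set Agt → FormAB Agt AP → FormAB Agt AP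

/-- Satisfaction for Φ_CL_AB. -/
def satAB {Agt AP : Type} (M : CGM Agt AP) : M.St → FormAB Agt AP → Prop
  | _, FormAB.top => True
  | _, FormAB.bot => False
  | s, FormAB.atom p => p ∈ M.lab s
  | s, FormAB.natom p => p ∉ M.lab s
  | s, FormAB.and φ ψ => satAB M s φ ∧ satAB M s ψ
  | s, FormAB.or φ ψ => satAB M s φ ∨ satAB M s ψ
  | s, FormAB.dia A φ => ∃ σ ∈ M.aja s A, ∀ t ∈ M.out s σ, satAB M t φ

/-- Validity for Φ_CL_AB. -/
def validAB {Agt AP : Type} (φ : FormAB Agt AP) : Prop :=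
  ∀ (M : CGM Agt AP) (s : M.St), satAB M s φ

/-- Propositional evaluation, treating diamond formulas as atoms (valuation `w`). -/
def evalAB {Agt AP : Type} (v : AP → Prop) (w : FormAB Agt AP → Prop) :
    FormAB Agt AP → Prop
  | FormAB.top => True
  | FormAB.bot => False
  | FormAB.atom p => v p
  | FormAB.natom p => ¬ v p
  | FormAB.and φ ψ => evalAB v w φ ∧ evalAB v w ψ
  | FormAB.or φ ψ => evalAB v w φ ∨ evalAB v w ψ
  | FormAB.dia A φ => w (FormAB.dia A φ)

/-- Derivability in the axiomatic system for CL_AB. -/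
inductive DerAB {Agt AP : Type} : FormAB Agt AP → Prop
  | r1 (Γ : List (FormAB Agt AP)) (ψ : FormAB Agt AP) :
      (∀ φ ∈ Γ, DerAB φ) →
      (∀ (v : AP → Prop) (w : FormAB Agt AP → Prop),
        (∀ φ ∈ Γ, evalAB v w φ) → evalAB v w ψ) →
      DerAB ψ
  | r2 (A : Set Agt) (φ : FormAB Agt AP) : DerAB φ → DerAB (FormAB.dia A φ)
  | r3 (A : Set Agt) (φ1 φ2 χ : FormAB Agt AP) :
      DerAB (FormAB.or (FormAB.dia A (FormAB.or φ1 φ2)) χ) →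
      DerAB (FormAB.or (FormAB.dia A φ1) (FormAB.or (FormAB.dia Set.univ φ2) χ))

/-- Literals of Φ_CL_AB. -/
inductive IsLitAB {Agt AP : Type} : FormAB Agt AP → Prop
  | atom (p : AP) : IsLitAB (FormAB.atom p)
  | natom (p : AP) : IsLitAB (FormAB.natom p)

/-- Elementary disjunctions (⊥ is the empty disjunction). -/
inductive IsElemDisjAB {Agt AP : Type} : FormAB Agt AP → Prop
  | bot : IsElemDisjAB FormAB.bot
  | lit {φ : FormAB Agt AP} : IsLitAB φ → IsElemDisjAB φ
  | or {φ ψ : FormAB Agt AP} : IsElemDisjAB φ → IsElemDisjAB ψ →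
      IsElemDisjAB (FormAB.or φ ψ)

/-- Finite disjunction of a list of formulas (empty disjunction is ⊥). -/
def bigOrAB {Agt AP : Type} : List (FormAB Agt AP) → FormAB Agt AP
  | [] => FormAB.bot
  | φ :: l => FormAB.or φ (bigOrAB l)

lemma eval_eq_sat {Agt AP : Type} (M : CGM Agt AP) (s : M.St) (φ : FormAB Agt AP) :
    evalAB (· ∈ M.lab s) (satAB M s) φ ↔ satAB M s φ := by
  induction φ with
  | top => simp [evalAB, satAB]
  | bot => simp [evalAB, satAB]
  | atom p => simp [evalAB, satAB]
  | natom p => simp [evalAB, satAB]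
  | and φ ψ ihφ ihψ => simp [evalAB, satAB, ihφ, ihψ]
  | or φ ψ ihφ ihψ => simp [evalAB, satAB, ihφ, ihψ]
  | dia A φ ih => simp [evalAB]

/-- Soundness of CL_AB: every derivable formula of Φ_CL_AB is valid. -/
theorem soundness_CL_AB
    {Agt AP : Type} [Fintype Agt] [Nonempty Agt] [Countable AP]
    (φ : FormAB Agt AP) (h : DerAB φ) : validAB φ := by
  induction h with
  | r1 Γ ψ _ htaut ih =>
    intro M s
    have := htaut (· ∈ M.lab s) (satAB M s)
      (fun φ hφ => (eval_eq_sat M s φ).2 (ih φ hφ M s))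
    exact (eval_eq_sat M s ψ).1 this
  | r2 A φ _ ih =>
    intro M s
    obtain ⟨σ, hσ⟩ := M.aja_ne s A
    exact ⟨σ, hσ, fun t _ => ih M t⟩
  | r3 A φ1 φ2 χ _ ih =>
    intro M s
    rcases ih M s with h | hχ
    · by_cases h1 : satAB M s (FormAB.dia A φ1)
      · exact Or.inl h1
      · obtain ⟨σ, hσ, hall⟩ := h
        have hex : ∃ t ∈ M.out s σ, satAB M t φ2 := by
          by_contra hc
          push_neg at hc
          exact h1 ⟨σ, hσ, fun t ht => (hall t ht).resolve_right (hc t ht)⟩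
        obtain ⟨t, ht, ht2⟩ := hex
        refine Or.inr (Or.inl ?_)
        by_cases hA : A = Set.univ
        · subst hA
          obtain ⟨t', hout⟩ := M.out_univ s σ hσ
          refine ⟨σ, hσ, fun u hu => ?_⟩
          rw [hout] at hu ht
          simp only [Set.mem_singleton_iff] at hu ht
          rw [hu, ← ht]
          exact ht2
        · rw [M.out_glue s A hA σ hσ] at ht
          obtain ⟨σ', hσ', _, ht'⟩ := ht
          obtain ⟨t'', hout⟩ := M.out_univ s σ' hσ'
          refine ⟨σ', hσ', fun u hu => ?_⟩
          rw [hout] at hu ht'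
          simp only [Set.mem_singleton_iff] at hu ht'
          rw [hu, ← ht']
          exact ht2
    · exact Or.inr (Or.inr hχ)
end

section
/- Downward validity for CL_AB: let γ be an elementary disjunction, PI a finite index set, and for each j ∈ PI let B_j be a coalition and ψ_j ∈ Φ_CL_AB, and let SD = γ ∨ ⋁_{j∈PI} ⟨B_j⟩ψ_j. If ⊨ SD, then either (a) ⊨ γ, or (b) there is j' ∈ PI such that ⊨ ⋁_{j∈PI⁰} ψ_j ∨ ψ_{j'}, where PI⁰ = {j ∈ PI : B_j = AG}. -/
open scoped Classical

namespace DV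

open Classical

variable {Agt AP : Type}

/-- Canonical out-function built from `aja` and a choice `F` of unique outcome
for grand-coalition joint actions. -/
noncomputable def mkOut {St Act : Type} (aja : St → Set Agt → Set (Agt → Option Act))
    (F : St → (Agt → Option Act) → St) : St → (Agt → Option Act) → Set St :=
  fun s σ =>
    if (∀ a, (σ a).isSome) then
      (if σ ∈ aja s Set.univ then {F s σ} else ∅)
    else if σ ∈ aja s {a | (σ a).isSome} then
      {t | ∃ σ' ∈ aja s Set.univ, subJA σ σ' ∧ t = F s σ'}
    else ∅

theorem mkOut_univ_mem {St Act : Type} {aja : St → Set Agt → Set (Agt → Option Act)}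
    {F : St → (Agt → Option Act) → St} {s : St} {σ : Agt → Option Act}
    (hfull : ∀ a, (σ a).isSome) (hσ : σ ∈ aja s Set.univ) :
    mkOut aja F s σ = {F s σ} := by
  simp [mkOut, hfull, hσ]

theorem mkOut_ne_mem {St Act : Type} {aja : St → Set Agt → Set (Agt → Option Act)}
    {F : St → (Agt → Option Act) → St} {s : St} {A : Set Agt} {σ : Agt → Option Act}
    (hA : A ≠ Set.univ) (hdom : ∀ a, (σ a).isSome ↔ a ∈ A) (hσ : σ ∈ aja s A) :
    mkOut aja F s σ = {t | ∃ σ' ∈ aja s Set.univ, subJA σ σ' ∧ t = F s σ'} := by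
  have hAset : {a | (σ a).isSome} = A := Set.ext fun a => hdom a
  have hnfull : ¬ ∀ a, (σ a).isSome := by
    intro h
    exact hA (Set.eq_univ_of_forall fun a => (hdom a).1 (h a))
  simp only [mkOut, if_neg hnfull, hAset, if_pos hσ]

theorem mkOut_not_full {St Act : Type} {aja : St → Set Agt → Set (Agt → Option Act)}
    {F : St → (Agt → Option Act) → St} {s : St} {σ : Agt → Option Act}
    (hfull : ∀ a, (σ a).isSome) (hσ : σ ∉ aja s Set.univ) :
    mkOut aja F s σ = ∅ := by
  simp [mkOut, hfull, hσ]

theorem mkOut_not_ne {St Act : Type} {aja : St → Set Agt → Set (Agt → Option Act)}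
    {F : St → (Agt → Option Act) → St} {s : St} {A : Set Agt} {σ : Agt → Option Act}
    (hdom : ∀ a, (σ a).isSome ↔ a ∈ A) (hA : A ≠ Set.univ) (hσ : σ ∉ aja s A) :
    mkOut aja F s σ = ∅ := by
  have hAset : {a | (σ a).isSome} = A := Set.ext fun a => hdom a
  have hnfull : ¬ ∀ a, (σ a).isSome := by
    intro h
    exact hA (Set.eq_univ_of_forall fun a => (hdom a).1 (h a))
  simp only [mkOut, if_neg hnfull, hAset, if_neg hσ]

end DV
namespace DV

open Classical

variable {Agt AP : Type} [Fintype Agt] [Nonempty Agt]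
variable {κ : Type} [Inhabited κ]

/-- Actions of the combined model. -/
abbrev ActC (N : κ → CGM Agt AP) : Type := (Σ k, (N k).Act) ⊕ (κ × ℕ)


set_option linter.unusedSectionVars false

theorem inlC_inj {N : κ → CGM Agt AP} {k : κ} {x y : (N k).Act}
    (h : (Sum.inl ⟨k, x⟩ : ActC N) = Sum.inl ⟨k, y⟩) : x = y := by
  injection h with h'
  simpa using h'

noncomputable def mapJA (N : κ → CGM Agt AP) (k : κ) (τ : Agt → Option ((N k).Act)) :
    Agt → Option (ActC N) :=
  fun a => (τ a).map (fun x => Sum.inl ⟨k, x⟩)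

noncomputable def unmapJA (N : κ → CGM Agt AP) (k : κ) (σ : Agt → Option (ActC N)) :
    Agt → Option ((N k).Act) :=
  fun a => (σ a).bind (fun x => match x with
    | Sum.inl q => if h : q.1 = k then some (h ▸ q.2) else none
    | Sum.inr _ => none)

theorem unmap_map (N : κ → CGM Agt AP) (k : κ) (τ : Agt → Option ((N k).Act)) :
    unmapJA N k (mapJA N k τ) = τ := by
  funext a
  cases h : τ a with
  | none => simp [unmapJA, mapJA, h]
  | some x => simp [unmapJA, mapJA, h]

theorem mapJA_isSome (N : κ → CGM Agt AP) (k : κ) (τ : Agt → Option ((N k).Act)) (a : Agt) :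
    (mapJA N k τ a).isSome ↔ (τ a).isSome := by
  simp [mapJA]

theorem mapJA_inj (N : κ → CGM Agt AP) (k : κ) {τ τ' : Agt → Option ((N k).Act)}
    (h : mapJA N k τ = mapJA N k τ') : τ = τ' := by
  funext a
  have := congrFun h a
  simp only [mapJA] at this
  cases h1 : τ a <;> cases h2 : τ' a <;> simp only [h1, h2, Option.map_none, Option.map_some] at this
  · rfl
  · exact absurd this (by simp)
  · exact absurd this (by simp)
  · exact congrArg some (inlC_inj (Option.some.inj this))

theorem subJA_map (N : κ → CGM Agt AP) (k : κ) (τ τ' : Agt → Option ((N k).Act)) :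
    subJA (mapJA N k τ) (mapJA N k τ') ↔ subJA τ τ' := by
  constructor
  · intro h a x hx
    have := h a (Sum.inl ⟨k, x⟩) (by simp [mapJA, hx])
    simp only [mapJA] at this
    cases h2 : τ' a with
    | none => simp [h2] at this
    | some y =>
      simp only [h2, Option.map_some] at this
      exact congrArg some (inlC_inj (Option.some.inj this))
  · intro h a x hx
    simp only [mapJA] at hx ⊢
    cases h1 : τ a with
    | none => simp [h1] at hx
    | some y =>
      simp [h1] at hx
      rw [h a y h1]
      simp [hx]

theorem restrict_map (N : κ → CGM Agt AP) (k : κ) (τ : Agt → Option ((N k).Act)) (A : Set Agt) :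
    restrictJA (mapJA N k τ) A = mapJA N k (restrictJA τ A) := by
  funext a
  by_cases h : a ∈ A <;> simp [restrictJA, mapJA, h]

/-- `aja` of the combined model. -/
def ajaC (N : κ → CGM Agt AP) : Option (Σ k, (N k).St) → Set Agt → Set (Agt → Option (ActC N))
  | none, A => {σ | ∀ a, (a ∈ A → ∃ p : κ × ℕ, σ a = some (Sum.inr p)) ∧ (a ∉ A → σ a = none)}
  | some ⟨k, t⟩, A => {σ | ∃ τ ∈ (N k).aja t A, σ = mapJA N k τ}

noncomputable def tgtO (N : κ → CGM Agt AP) (o : Option (ActC N)) : κ :=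
  match o with
  | some (Sum.inr p) => p.1
  | some (Sum.inl q) => q.1
  | none => default

def numO (N : κ → CGM Agt AP) (o : Option (ActC N)) : ℕ :=
  match o with
  | some (Sum.inr p) => p.2
  | _ => 0

noncomputable def dict (N : κ → CGM Agt AP) (σ : Agt → Option (ActC N)) : Agt :=
  (Fintype.equivFin Agt).symm ⟨(∑ a, numO N (σ a)) % Fintype.card Agt,
    Nat.mod_lt _ Fintype.card_pos⟩

noncomputable def pickOut (N : κ → CGM Agt AP) (k : κ) (t : (N k).St)
    (τ : Agt → Option ((N k).Act)) : (N k).St :=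
  if h : ((N k).out t τ).Nonempty then h.choose else Classical.choice (N k).st_ne

noncomputable def FC (N : κ → CGM Agt AP) (s0 : ∀ k, (N k).St) :
    Option (Σ k, (N k).St) → (Agt → Option (ActC N)) → Option (Σ k, (N k).St)
  | none, σ => some ⟨tgtO N (σ (dict N σ)), s0 _⟩
  | some ⟨k, t⟩, σ => some ⟨k, pickOut N k t (unmapJA N k σ)⟩

end DV
namespace DV

open Classical

set_option linter.unusedSectionVars false

variable {Agt AP : Type} [Fintype Agt] [Nonempty Agt]
variable {κ : Type} [Inhabited κ]

theorem ajaC_ne (N : κ → CGM Agt AP) :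
    ∀ s A, (ajaC N s A).Nonempty := by
  rintro (_ | ⟨k, t⟩) A
  · refine ⟨fun a => if a ∈ A then some (Sum.inr (default, 0)) else none, fun a => ⟨?_, ?_⟩⟩
    · intro ha; exact ⟨(default, 0), if_pos ha⟩
    · intro ha; exact if_neg ha
  · obtain ⟨τ, hτ⟩ := (N k).aja_ne t A
    exact ⟨mapJA N k τ, τ, hτ, rfl⟩

theorem ajaC_dom (N : κ → CGM Agt AP) :
    ∀ s A, ∀ σ ∈ ajaC N s A, ∀ a, (σ a).isSome ↔ a ∈ A := by
  rintro (_ | ⟨k, t⟩) A σ hσ a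
  · constructor
    · intro h
      by_contra ha
      rw [(hσ a).2 ha] at h
      simp at h
    · intro ha
      obtain ⟨p, hp⟩ := (hσ a).1 ha
      simp [hp]
  · obtain ⟨τ, hτ, rfl⟩ := hσ
    rw [mapJA_isSome]
    exact (N k).aja_dom t A τ hτ a

theorem ajaC_glue (N : κ → CGM Agt AP) :
    ∀ s A (σ : Agt → Option (ActC N)), A.Nonempty →
      (∀ a, (σ a).isSome ↔ a ∈ A) →
      (σ ∈ ajaC N s A ↔ ∀ a ∈ A, restrictJA σ {a} ∈ ajaC N s {a}) := by
  rintro (_ | ⟨k, t⟩) A σ hAne hdom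
  · constructor
    · intro hσ a ha a'
      constructor
      · intro ha'
        have : a' = a := ha'
        subst this
        obtain ⟨p, hp⟩ := (hσ a').1 ha
        exact ⟨p, by simpa [restrictJA] using hp⟩
      · intro ha'
        simp only [restrictJA, if_neg ha']
    · intro h a
      constructor
      · intro ha
        obtain ⟨p, hp⟩ := ((h a ha) a).1 rfl
        exact ⟨p, by simpa [restrictJA] using hp⟩
      · intro ha
        have hns : ¬ (σ a).isSome := fun h => ha ((hdom a).1 h)
        exact Option.not_isSome_iff_eq_none.mp hns
  · have hmain := (N k).aja_glue t A
    constructor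
    · rintro ⟨τ, hτ, rfl⟩ a ha
      have hdomτ : ∀ a, (τ a).isSome ↔ a ∈ A := (N k).aja_dom t A τ hτ
      have hres := ((N k).aja_glue t A τ hAne hdomτ).1 hτ a ha
      exact ⟨restrictJA τ {a}, hres, restrict_map N k τ {a}⟩
    · intro h
      set τ := unmapJA N k σ with hτdef
      have hpt : ∀ a ∈ A, restrictJA τ {a} ∈ (N k).aja t {a} ∧ σ a = mapJA N k τ a := by
        intro a ha
        obtain ⟨τa, hτa, heq⟩ := h a ha
        have hσa : σ a = mapJA N k τa a := by
          have := congrFun heq a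
          simpa [restrictJA] using this
        have hτaτ : τ a = τa a := by
          have h1 : τ a = unmapJA N k (mapJA N k τa) a := by
            simp only [hτdef, unmapJA, hσa]
          rw [h1, unmap_map]
        constructor
        · have hres : restrictJA τ {a} = τa := by
            funext a'
            by_cases h' : a' = a
            · subst h'
              simp only [restrictJA, Set.mem_singleton_iff, if_pos rfl]
              exact hτaτ
            · have hd := (N k).aja_dom t {a} τa hτa a'
              have : τa a' = none := by
                refine Option.not_isSome_iff_eq_none.mp fun hs => h' ?_
                exact hd.1 hs
              simp only [restrictJA, Set.mem_singleton_iff, if_neg h', this]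
          rw [hres]; exact hτa
        · rw [mapJA, hτaτ, ← mapJA, hσa]
      have hdomτ : ∀ a, (τ a).isSome ↔ a ∈ A := by
        intro a
        by_cases ha : a ∈ A
        · obtain ⟨τa, hτa, heq⟩ := h a ha
          have hσa : σ a = mapJA N k τa a := by
            have := congrFun heq a
            simpa [restrictJA] using this
          have h1 : τ a = unmapJA N k (mapJA N k τa) a := by
            simp only [hτdef, unmapJA, hσa]
          rw [h1, unmap_map]
          simp [ha, (N k).aja_dom t {a} τa hτa a]
        · have hns : σ a = none :=
            Option.not_isSome_iff_eq_none.mp fun hs => ha ((hdom a).1 hs)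
          simp [hτdef, unmapJA, hns, ha]
      refine ⟨τ, ((N k).aja_glue t A τ hAne hdomτ).2 fun a ha => (hpt a ha).1, ?_⟩
      funext a
      by_cases ha : a ∈ A
      · exact (hpt a ha).2
      · have hns : σ a = none :=
          Option.not_isSome_iff_eq_none.mp fun hs => ha ((hdom a).1 hs)
        have hτn : τ a = none := by simp [hτdef, unmapJA, hns]
        simp [mapJA, hτn, hns]

end DV
namespace DV

open Classical

set_option linter.unusedSectionVars false

variable {Agt AP : Type} [Fintype Agt] [Nonempty Agt]
variable {κ : Type} [Inhabited κ]

/-- The combined model. -/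
noncomputable def CC (N : κ → CGM Agt AP) (s0 : ∀ k, (N k).St) (lab0 : Set AP) :
    CGM Agt AP where
  St := Option (Σ k, (N k).St)
  Act := ActC N
  st_ne := ⟨none⟩
  act_ne := ⟨Sum.inr (default, 0)⟩
  aja := ajaC N
  out := mkOut (ajaC N) (FC N s0)
  lab := fun s => match s with | none => lab0 | some u => (N u.1).lab u.2
  aja_ne := ajaC_ne N
  aja_dom := ajaC_dom N
  aja_glue := ajaC_glue N
  out_univ := by
    intro s σ hσ
    exact ⟨FC N s0 s σ,
      mkOut_univ_mem (fun a => (ajaC_dom N s _ σ hσ a).2 trivial) hσ⟩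
  out_univ_not := fun s σ hfull hσ => mkOut_not_full hfull hσ
  out_glue := by
    intro s A hA σ hσ
    have hdom := ajaC_dom N s A σ hσ
    rw [mkOut_ne_mem hA hdom hσ]
    ext t
    constructor
    · rintro ⟨σ', hσ', hsub, rfl⟩
      refine ⟨σ', hσ', hsub, ?_⟩
      rw [mkOut_univ_mem (fun a => (ajaC_dom N s _ σ' hσ' a).2 trivial) hσ']
      rfl
    · rintro ⟨σ', hσ', hsub, ht⟩
      rw [mkOut_univ_mem (fun a => (ajaC_dom N s _ σ' hσ' a).2 trivial) hσ'] at ht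
      exact ⟨σ', hσ', hsub, ht⟩
  out_not := fun s A σ hdom hA hσ => mkOut_not_ne hdom hA hσ

/-- Outcome correspondence at component states. -/
theorem out_CC_some (N : κ → CGM Agt AP) (s0 : ∀ k, (N k).St) (lab0 : Set AP)
    (k : κ) (t : (N k).St) (A : Set Agt) (τ : Agt → Option ((N k).Act))
    (hτ : τ ∈ (N k).aja t A) :
    (CC N s0 lab0).out (some ⟨k, t⟩) (mapJA N k τ) =
      (fun u => (some ⟨k, u⟩ : Option (Σ k, (N k).St))) '' (N k).out t τ := by
  have hdomτ : ∀ a, (τ a).isSome ↔ a ∈ A := (N k).aja_dom t A τ hτ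
  have hmem : mapJA N k τ ∈ ajaC N (some ⟨k, t⟩) A := ⟨τ, hτ, rfl⟩
  have hpick : ∀ τ' ∈ (N k).aja t Set.univ,
      (N k).out t τ' = {pickOut N k t τ'} := by
    intro τ' hτ'
    obtain ⟨u, hu⟩ := (N k).out_univ t τ' hτ'
    have hne : ((N k).out t τ').Nonempty := by rw [hu]; exact ⟨u, rfl⟩
    have : pickOut N k t τ' ∈ (N k).out t τ' := by
      rw [pickOut, dif_pos hne]; exact hne.choose_spec
    rw [hu] at this ⊢
    rw [this]
  by_cases hA : A = Set.univ
  · subst hA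
    have hfull : ∀ a, ((mapJA N k τ) a).isSome := by
      intro a; rw [mapJA_isSome]; exact (hdomτ a).2 trivial
    show mkOut (ajaC N) (FC N s0) _ _ = _
    rw [mkOut_univ_mem hfull hmem]
    have hF : FC N s0 (some ⟨k, t⟩) (mapJA N k τ) = some ⟨k, pickOut N k t τ⟩ := by
      simp [FC, unmap_map]
    rw [hF, hpick τ hτ]
    ext u
    simp [Set.image_singleton]
  · show mkOut (ajaC N) (FC N s0) _ _ = _
    have hdomm : ∀ a, ((mapJA N k τ) a).isSome ↔ a ∈ A := by
      intro a; rw [mapJA_isSome]; exact hdomτ a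
    rw [mkOut_ne_mem hA hdomm hmem]
    rw [(N k).out_glue t A hA τ hτ]
    ext u
    constructor
    · rintro ⟨σ', hσ', hsub, rfl⟩
      obtain ⟨τ', hτ', rfl⟩ := hσ'
      refine ⟨pickOut N k t τ', ⟨τ', hτ', ?_, ?_⟩, ?_⟩
      · exact (subJA_map N k τ τ').1 hsub
      · rw [hpick τ' hτ']; rfl
      · simp [FC, unmap_map]
    · rintro ⟨v, ⟨τ', hτ', hsub, hv⟩, rfl⟩
      refine ⟨mapJA N k τ', ⟨τ', hτ', rfl⟩, (subJA_map N k τ τ').2 hsub, ?_⟩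
      rw [hpick τ' hτ'] at hv
      have : v = pickOut N k t τ' := hv
      rw [this]
      simp [FC, unmap_map]

end DV
namespace DV

open Classical

set_option linter.unusedSectionVars false

variable {Agt AP : Type} [Fintype Agt] [Nonempty Agt]
variable {κ : Type} [Inhabited κ]

theorem sat_CC_some (N : κ → CGM Agt AP) (s0 : ∀ k, (N k).St) (lab0 : Set AP)
    (k : κ) (φ : FormAB Agt AP) (t : (N k).St) :
    satAB (CC N s0 lab0) (some ⟨k, t⟩) φ ↔ satAB (N k) t φ := by
  induction φ generalizing t with
  | top => simp [satAB]
  | bot => simp [satAB]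
  | atom p => simp [satAB, CC]
  | natom p => simp [satAB, CC]
  | and φ ψ ihφ ihψ => simp [satAB, ihφ, ihψ]
  | or φ ψ ihφ ihψ => simp [satAB, ihφ, ihψ]
  | dia A φ ih =>
    constructor
    · rintro ⟨σ, hσ, hout⟩
      obtain ⟨τ, hτ, rfl⟩ := hσ
      refine ⟨τ, hτ, fun u hu => ?_⟩
      have hmem : (some ⟨k, u⟩ : (CC N s0 lab0).St) ∈
          (CC N s0 lab0).out (some ⟨k, t⟩) (mapJA N k τ) := by
        rw [out_CC_some N s0 lab0 k t A τ hτ]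
        exact ⟨u, hu, rfl⟩
      exact (ih u).1 (hout _ hmem)
    · rintro ⟨τ, hτ, hout⟩
      refine ⟨mapJA N k τ, ⟨τ, hτ, rfl⟩, fun u hu => ?_⟩
      rw [out_CC_some N s0 lab0 k t A τ hτ] at hu
      obtain ⟨v, hv, rfl⟩ := hu
      exact (ih v).2 (hout v hv)

theorem out_CC_none_univ (N : κ → CGM Agt AP) (s0 : ∀ k, (N k).St) (lab0 : Set AP)
    (σ : Agt → Option (ActC N)) (hσ : σ ∈ ajaC N none Set.univ) :
    ∃ k, (CC N s0 lab0).out none σ = {some ⟨k, s0 k⟩} := by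
  refine ⟨tgtO N (σ (dict N σ)), ?_⟩
  show mkOut _ _ _ _ = _
  rw [mkOut_univ_mem (fun a => (ajaC_dom N none _ σ hσ a).2 trivial) hσ]
  rfl

theorem reach_CC_none (N : κ → CGM Agt AP) (s0 : ∀ k, (N k).St) (lab0 : Set AP)
    (A : Set Agt) (hA : A ≠ Set.univ) (σ : Agt → Option (ActC N))
    (hσ : σ ∈ ajaC N none A) (k : κ) :
    (some ⟨k, s0 k⟩ : (CC N s0 lab0).St) ∈ (CC N s0 lab0).out none σ := by
  obtain ⟨b, hb⟩ := Set.ne_univ_iff_exists_notMem A |>.1 hA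
  set n := Fintype.card Agt with hn
  have hn0 : 0 < n := Fintype.card_pos
  set e := Fintype.equivFin Agt with he
  set T : ℕ := ∑ a ∈ Finset.univ.erase b, (if a ∈ A then numO N (σ a) else 0) with hT
  set m : ℕ := (e b).val + (n - T % n) with hm
  set σ' : Agt → Option (ActC N) := fun a =>
    if a ∈ A then σ a else if a = b then some (Sum.inr (k, m)) else some (Sum.inr (k, 0))
    with hσ'
  have hσ'b : σ' b = some (Sum.inr (k, m)) := by simp [hσ', hb]
  have hσ'univ : σ' ∈ ajaC N none Set.univ := by
    intro a
    refine ⟨fun _ => ?_, fun h => absurd trivial h⟩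
    by_cases ha : a ∈ A
    · obtain ⟨p, hp⟩ := (hσ a).1 ha
      exact ⟨p, by simp [hσ', ha, hp]⟩
    · by_cases hab : a = b
      · exact ⟨(k, m), by rw [hab]; exact hσ'b⟩
      · exact ⟨(k, 0), by simp [hσ', ha, hab]⟩
  have hsub : subJA σ σ' := by
    intro a x hx
    have ha : a ∈ A := (ajaC_dom N none A σ hσ a).1 (by simp [hx])
    simp [hσ', ha, hx]
  have hsum : ∑ a, numO N (σ' a) = m + T := by
    rw [← Finset.add_sum_erase Finset.univ _ (Finset.mem_univ b)]
    congr 1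
    · rw [hσ'b]
      rfl
    · apply Finset.sum_congr rfl
      intro a ha
      have hab : a ≠ b := Finset.ne_of_mem_erase ha
      by_cases haA : a ∈ A
      · simp [hσ', haA]
      · simp [hσ', haA, hab, numO]
  have hmod : (m + T) % n = (e b).val := by
    have h1 : n * (T / n) + T % n = T := Nat.div_add_mod T n
    have hrlt : T % n < n := Nat.mod_lt _ hn0
    have h2 : m + T = n * (T / n + 1) + (e b).val := by
      have h3 : n * (T / n + 1) = n * (T / n) + n := by ring
      omega
    rw [h2, Nat.mul_add_mod]
    exact Nat.mod_eq_of_lt (e b).isLt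
  have hdict : dict N σ' = b := by
    rw [dict]
    have : (⟨(∑ a, numO N (σ' a)) % Fintype.card Agt,
        Nat.mod_lt _ Fintype.card_pos⟩ : Fin (Fintype.card Agt)) = e b := by
      apply Fin.ext
      show (∑ a, numO N (σ' a)) % Fintype.card Agt = (e b).val
      rw [hsum]
      exact hmod
    rw [this, ← he]
    exact e.symm_apply_apply b
  have hF : FC N s0 none σ' = some ⟨k, s0 k⟩ := by
    have h1 : tgtO N (σ' (dict N σ')) = k := by rw [hdict, hσ'b]; simp [tgtO]
    show (some ⟨tgtO N (σ' (dict N σ')), s0 (tgtO N (σ' (dict N σ')))⟩ :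
        Option (Σ k, (N k).St)) = some ⟨k, s0 k⟩
    exact congrArg (fun y : κ => (some ⟨y, s0 y⟩ : Option (Σ k, (N k).St))) h1
  show (some ⟨k, s0 k⟩ : Option (Σ k, (N k).St)) ∈ mkOut (ajaC N) (FC N s0) none σ
  rw [mkOut_ne_mem hA (ajaC_dom N none A σ hσ) hσ]
  exact ⟨σ', hσ'univ, hsub, hF.symm⟩

end DV
namespace DV

set_option linter.unusedSectionVars false

variable {Agt AP : Type}

theorem satAB_bigOr {M : CGM Agt AP} {s : M.St} (l : List (FormAB Agt AP)) :
    satAB M s (bigOrAB l) ↔ ∃ φ ∈ l, satAB M s φ := by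
  induction l with
  | nil => simp [bigOrAB, satAB]
  | cons φ l ih => simp [bigOrAB, satAB, ih]

theorem elem_lab {M M' : CGM Agt AP} {s : M.St} {s' : M'.St}
    (h : M.lab s = M'.lab s') {γ : FormAB Agt AP} (hγ : IsElemDisjAB γ) :
    satAB M s γ ↔ satAB M' s' γ := by
  induction hγ with
  | bot => simp [satAB]
  | lit hl =>
    cases hl with
    | atom p => simp [satAB, h]
    | natom p => simp [satAB, h]
  | or h1 h2 ih1 ih2 => simp [satAB, ih1, ih2]

end DV
/-- Downward validity for CL_AB: if a standard disjunction γ ∨ ⋁_{j∈PI}⟨B_j⟩ψ_j is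
valid then γ is valid, or ⋁_{j∈PI⁰}ψ_j ∨ ψ_{j'} is valid for some j' ∈ PI, where
PI⁰ = {j ∈ PI : B_j = AG}. -/
theorem downward_validity_CL_AB
    {Agt AP : Type} [Fintype Agt] [Nonempty Agt] [Countable AP]
    {ι : Type} [DecidableEq ι]
    (γ : FormAB Agt AP) (hγ : IsElemDisjAB γ)
    (PI : Finset ι) (B : ι → Set Agt) (ψ : ι → FormAB Agt AP)
    (hval : validAB (FormAB.or γ
      (bigOrAB (PI.toList.map fun j => FormAB.dia (B j) (ψ j))))) :
    validAB γ ∨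
      ∃ j' ∈ PI, validAB (FormAB.or
        (bigOrAB ((PI.filter fun j => B j = Set.univ).toList.map fun j => ψ j))
        (ψ j')) := by
  by_contra hcon
  push_neg at hcon
  obtain ⟨hγv, hψv⟩ := hcon
  rw [validAB] at hγv
  push_neg at hγv
  obtain ⟨M₀, s₀, hs₀⟩ := hγv
  rcases PI.eq_empty_or_nonempty with hPI | hPI
  · subst hPI
    have h0 : satAB M₀ s₀ γ ∨ satAB M₀ s₀ (bigOrAB
        ((∅ : Finset ι).toList.map fun j => FormAB.dia (B j) (ψ j))) := hval M₀ s₀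
    rcases h0 with h0 | h0
    · exact hs₀ h0
    · rw [DV.satAB_bigOr] at h0
      obtain ⟨φ, hφ, -⟩ := h0
      simp at hφ
  · haveI : Nonempty {j // j ∈ PI} := ⟨⟨hPI.choose, hPI.choose_spec⟩⟩
    haveI : Inhabited {j // j ∈ PI} := Classical.inhabited_of_nonempty ‹_›
    have hcounter : ∀ k : {j // j ∈ PI}, ∃ (M : CGM Agt AP) (s : M.St),
        ¬ satAB M s (FormAB.or
          (bigOrAB ((PI.filter fun j => B j = Set.univ).toList.map fun j => ψ j))
          (ψ k.1)) := by
      intro k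
      have h1 := hψv k.1 k.2
      rw [validAB] at h1
      push_neg at h1
      exact h1
    choose N s0 hN using hcounter
    have hvalC : satAB (DV.CC N s0 (M₀.lab s₀)) none (FormAB.or γ
        (bigOrAB (PI.toList.map fun j => FormAB.dia (B j) (ψ j)))) :=
      hval (DV.CC N s0 (M₀.lab s₀)) none
    have hγf : ¬ satAB (DV.CC N s0 (M₀.lab s₀)) none γ := by
      intro h
      exact hs₀ ((DV.elem_lab (show (DV.CC N s0 (M₀.lab s₀)).lab none = M₀.lab s₀ from rfl)
        hγ).1 h)
    have hbig : satAB (DV.CC N s0 (M₀.lab s₀)) none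
        (bigOrAB (PI.toList.map fun j => FormAB.dia (B j) (ψ j))) := by
      rcases (hvalC : _ ∨ _) with h | h
      · exact absurd h hγf
      · exact h
    replace hbig := (DV.satAB_bigOr _).1 hbig
    obtain ⟨φ, hφmem, hφ⟩ := hbig
    rw [List.mem_map] at hφmem
    obtain ⟨j, hj, rfl⟩ := hφmem
    rw [Finset.mem_toList] at hj
    obtain ⟨σ, hσ, hout⟩ := hφ
    by_cases hBj : B j = Set.univ
    · rw [hBj] at hσ
      obtain ⟨k, hk⟩ := DV.out_CC_none_univ N s0 (M₀.lab s₀) σ hσ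
      have hmem : (some ⟨k, s0 k⟩ : (DV.CC N s0 (M₀.lab s₀)).St) ∈
          (DV.CC N s0 (M₀.lab s₀)).out none σ := by
        show _ ∈ (DV.CC N s0 (M₀.lab s₀)).out none σ
        rw [show (DV.CC N s0 (M₀.lab s₀)).out none σ = {some ⟨k, s0 k⟩} from hk]
        rfl
      have hsat := hout _ hmem
      rw [DV.sat_CC_some] at hsat
      apply hN k
      refine Or.inl ?_
      rw [DV.satAB_bigOr]
      exact ⟨ψ j, List.mem_map.2 ⟨j, Finset.mem_toList.2
        (Finset.mem_filter.2 ⟨hj, hBj⟩), rfl⟩, hsat⟩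
    · have hmem := DV.reach_CC_none N s0 (M₀.lab s₀) (B j) hBj σ hσ (⟨j, hj⟩ : {j // j ∈ PI})
      have hsat := hout _ hmem
      rw [DV.sat_CC_some] at hsat
      exact hN ⟨j, hj⟩ (Or.inr hsat)
end
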